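/- arXiv:2110.10685 — 4 statements merged into one kernel-verified Lean document; each statement's English description precedes it below -/
import Mathlib

section
/- Let p ≥ 1 be an integer and let 0 ≤ l < p. For every bitstring s ∈ {0,1}^{2p+1} with L(s) = l, the partial flip satisfies: L(F(s)) = l, F(s) has the opposite parity to s (i.e., s is odd if and only if F(s) is even), and F(F(s)) = s. Consequently F restricts to a bijection from 𝓛_l onto 𝓛'_l and from 𝓛'_l onto 𝓛_l. -/
open Complex Finset

namespace QAOA

abbrev BS (p : ℕ) := Fin (2*p+1) → ZMod 2

def bit (p : ℕ) (s : BS p) (j : ℕ) : ZMod 2 := s ⟨j % (2*p+1), Nat.mod_lt _ (by omega)⟩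

/-- Level of symmetry. -/
def L (p : ℕ) (s : BS p) : ℕ :=
  Nat.findGreatest (fun j => ∀ k ≤ j, bit p s (p + k) = bit p s (p - k)) p

/-- Partial flip. -/
def pflip (p : ℕ) (s : BS p) : BS p :=
  fun j => if p - L p s ≤ (j : ℕ) ∧ (j : ℕ) ≤ p + L p s then s j + 1 else s j

def IsOdd (p : ℕ) (s : BS p) : Prop := bit p s 0 ≠ bit p s p

instance (p : ℕ) : DecidablePred (IsOdd p) := fun s => by unfold IsOdd; infer_instance

/-- (−1)^{1[s odd]} as a complex number. -/
noncomputable def sgn (p : ℕ) (s : BS p) : ℂ := if IsOdd p s then -1 else 1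

/-- (−1)^b for a bit b. -/
noncomputable def sgnR (b : ZMod 2) : ℝ := if b = 0 then 1 else -1

noncomputable def B (p : ℕ) (β : Fin p → ℝ) (s : BS p) : ℂ :=
  ∏ j : Fin p,
    ((Real.cos (β j / 2) : ℂ) ^
      ((if bit p s (j : ℕ) = bit p s ((j : ℕ) + 1) then 1 else 0) +
       (if bit p s (2*p - (j : ℕ)) = bit p s (2*p - (j : ℕ) - 1) then 1 else 0)) *
     (Complex.I * (Real.sin (β j / 2) : ℂ)) ^
      ((if bit p s (j : ℕ) ≠ bit p s ((j : ℕ) + 1) then 1 else 0) +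
       (if bit p s (2*p - (j : ℕ)) ≠ bit p s (2*p - (j : ℕ) - 1) then 1 else 0)))

noncomputable def phi (p : ℕ) (γ : Fin p → ℝ) (s : BS p) : ℝ :=
  ∑ j : Fin p, γ j / 2 * (sgnR (bit p s (2*p - (j : ℕ))) - sgnR (bit p s (j : ℕ)))


lemma bit_lt (p : ℕ) (s : BS p) (j : ℕ) (h : j < 2*p+1) : bit p s j = s ⟨j, h⟩ := by
  unfold bit
  congr 1
  exact Fin.ext (Nat.mod_eq_of_lt h)

abbrev Psym (p : ℕ) (s : BS p) (j : ℕ) : Prop :=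
  ∀ k ≤ j, bit p s (p + k) = bit p s (p - k)

lemma Psym_mono (p : ℕ) (s : BS p) {m n : ℕ} (h : m ≤ n) (hn : Psym p s n) : Psym p s m :=
  fun k hk => hn k (hk.trans h)

lemma L_eq_iff (p : ℕ) (s : BS p) {l : ℕ} (hl : l < p) :
    L p s = l ↔ Psym p s l ∧ ¬ Psym p s (l+1) := by
  unfold L
  rw [Nat.findGreatest_eq_iff]
  constructor
  · rintro ⟨h1, h2, h3⟩
    refine ⟨?_, h3 (by omega) (by omega)⟩
    rcases Nat.eq_zero_or_pos l with rfl | hpos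
    · intro k hk
      interval_cases k
      rfl
    · exact h2 (by omega)
  · rintro ⟨h1, h2⟩
    exact ⟨by omega, fun _ => h1, fun {n} hn hnp hPn => h2 (Psym_mono p s (by omega) hPn)⟩

lemma pflip_apply (p : ℕ) (s : BS p) (j : Fin (2*p+1)) :
    pflip p s j = if p - L p s ≤ (j : ℕ) ∧ (j : ℕ) ≤ p + L p s then s j + 1 else s j := rfl

lemma bit_pflip (p : ℕ) (s : BS p) (j : ℕ) (h : j < 2*p+1) :
    bit p (pflip p s) j =
      if p - L p s ≤ j ∧ j ≤ p + L p s then bit p s j + 1 else bit p s j := by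
  rw [bit_lt p _ j h, bit_lt p s j h]
  rfl

lemma pflip_key (p : ℕ) (hp : 1 ≤ p) {l : ℕ} (hl : l < p) (s : BS p) (hs : L p s = l) :
    L p (pflip p s) = l ∧ (IsOdd p s ↔ ¬ IsOdd p (pflip p s)) ∧ pflip p (pflip p s) = s := by
  obtain ⟨hP, hnP⟩ := (L_eq_iff p s hl).mp hs
  have hne : bit p s (p + (l+1)) ≠ bit p s (p - (l+1)) := by
    intro h
    apply hnP
    intro k hk
    rcases Nat.lt_or_ge k (l+1) with hk' | hk'
    · exact hP k (by omega)
    · have : k = l + 1 := by omega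
      subst this
      exact h
  have hP' : Psym p (pflip p s) l := by
    intro k hk
    rw [bit_pflip p s (p+k) (by omega), bit_pflip p s (p-k) (by omega), hs,
        if_pos (by omega), if_pos (by omega), hP k hk]
  have hnP' : ¬ Psym p (pflip p s) (l+1) := by
    intro h
    apply hne
    have h1 : bit p (pflip p s) (p+(l+1)) = bit p s (p+(l+1)) := by
      rw [bit_pflip p s _ (by omega), hs, if_neg (by omega)]
    have h2 : bit p (pflip p s) (p-(l+1)) = bit p s (p-(l+1)) := by
      rw [bit_pflip p s _ (by omega), hs, if_neg (by omega)]
    rw [← h1, ← h2]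
    exact h (l+1) le_rfl
  have hL' : L p (pflip p s) = l := (L_eq_iff p _ hl).mpr ⟨hP', hnP'⟩
  refine ⟨hL', ?_, ?_⟩
  · have h0 : bit p (pflip p s) 0 = bit p s 0 := by
      rw [bit_pflip p s 0 (by omega), hs, if_neg (by omega)]
    have hpp : bit p (pflip p s) p = bit p s p + 1 := by
      rw [bit_pflip p s p (by omega), hs, if_pos (by omega)]
    unfold IsOdd
    rw [h0, hpp]
    generalize bit p s 0 = a
    generalize bit p s p = b
    revert a b
    decide
  · funext j
    rw [pflip_apply, pflip_apply, hL', hs]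
    by_cases h : p - l ≤ (j : ℕ) ∧ (j : ℕ) ≤ p + l
    · rw [if_pos h, if_pos h]
      generalize s j = a
      revert a
      decide
    · rw [if_neg h, if_neg h]

/-- for `1 ≤ p` and `l < p`, the partial flip of any bitstring of
level of symmetry `l` has level `l`, opposite parity, and `F` is an involution there;
consequently `F` restricts to a bijection `𝓛_l ↔ 𝓛'_l` (in both directions). -/
theorem stmt_0 (p : ℕ) (hp : 1 ≤ p) (l : ℕ) (hl : l < p) :
    (∀ s : BS p, L p s = l →
      L p (pflip p s) = l ∧ (IsOdd p s ↔ ¬ IsOdd p (pflip p s)) ∧ pflip p (pflip p s) = s) ∧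
    Set.BijOn (pflip p) {s : BS p | L p s = l ∧ IsOdd p s} {s : BS p | L p s = l ∧ ¬ IsOdd p s} ∧
    Set.BijOn (pflip p) {s : BS p | L p s = l ∧ ¬ IsOdd p s} {s : BS p | L p s = l ∧ IsOdd p s} := by
  refine ⟨fun s hs => pflip_key p hp hl s hs, ⟨?_, ?_, ?_⟩, ⟨?_, ?_, ?_⟩⟩
  · rintro s ⟨hLs, hodd⟩
    obtain ⟨h1, h2, h3⟩ := pflip_key p hp hl s hLs
    exact ⟨h1, h2.mp hodd⟩
  · rintro s ⟨hLs, -⟩ t ⟨hLt, -⟩ h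
    rw [← (pflip_key p hp hl s hLs).2.2, h, (pflip_key p hp hl t hLt).2.2]
  · rintro t ⟨hLt, hodd⟩
    obtain ⟨h1, h2, h3⟩ := pflip_key p hp hl t hLt
    refine ⟨pflip p t, ⟨h1, ?_⟩, h3⟩
    by_contra hc
    exact hodd (h2.mpr hc)
  · rintro s ⟨hLs, hodd⟩
    obtain ⟨h1, h2, h3⟩ := pflip_key p hp hl s hLs
    refine ⟨h1, ?_⟩
    by_contra hc
    exact hodd (h2.mpr hc)
  · rintro s ⟨hLs, -⟩ t ⟨hLt, -⟩ h
    rw [← (pflip_key p hp hl s hLs).2.2, h, (pflip_key p hp hl t hLt).2.2]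
  · rintro t ⟨hLt, hodd⟩
    obtain ⟨h1, h2, h3⟩ := pflip_key p hp hl t hLt
    exact ⟨pflip p t, ⟨h1, h2.mp hodd⟩, h3⟩

end QAOA
end

section
/- Let p ≥ 1, β, γ ∈ ℝ^p, n ≥ 1 an integer, u, v, t ∈ {0,1}^{2p+1} bitstrings, and m : {0,1}^{2p+1} → ℕ a function (multiplicities). Setting C_w := exp(−φ(γ,w)²/(2n)) for every bitstring w, the complex number λ := (n·B_{β,t}/2)·(−C_{u⊕t}·C_{v⊕t}·∏_{s} C_{s⊕t}^{m_s} + C_{u⊕F(t)}·C_{v⊕F(t)}·∏_{s} C_{s⊕F(t)}^{m_s}) satisfies |λ| ≤ (1/4)·|B_{β,t}|·( |φ(γ,u⊕t)² − φ(γ,u⊕F(t))²| + |φ(γ,v⊕t)² − φ(γ,v⊕F(t))²| + ∑_{s} m_s·|φ(γ,s⊕t)² − φ(γ,s⊕F(t))²| ), where the products and the sum run over all s ∈ {0,1}^{2p+1} and ⊕ is bitwise XOR. -/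
open Complex Finset

namespace QAOA

lemma exp_lip {a b : ℝ} (ha : 0 ≤ a) (hb : 0 ≤ b) :
    |Real.exp (-a) - Real.exp (-b)| ≤ |a - b| := by
  wlog h : b ≤ a generalizing a b
  · rw [abs_sub_comm, abs_sub_comm a b]; exact this hb ha (le_of_not_ge h)
  have h1 : Real.exp (-a) ≤ Real.exp (-b) := Real.exp_le_exp.mpr (by linarith)
  rw [abs_of_nonpos (by linarith), _root_.abs_of_nonneg (by linarith)]
  have key : Real.exp (-a) = Real.exp (-b) * Real.exp (-(a-b)) := by
    rw [← Real.exp_add]; ring_nf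
  have hx : 1 - (a-b) ≤ Real.exp (-(a-b)) := by
    have := Real.add_one_le_exp (-(a-b)); linarith
  have he : Real.exp (-b) ≤ 1 := Real.exp_le_one_iff.mpr (by linarith)
  have hep : 0 < Real.exp (-b) := Real.exp_pos _
  nlinarith

lemma triple_exp {ι : Type*} [Fintype ι] (a b : ℝ) (f : ι → ℝ) (m : ι → ℕ) (c : ℝ) (hc : c ≠ 0) :
    Real.exp (-a / c) * Real.exp (-b / c) * ∏ s : ι, Real.exp (-(f s) / c) ^ m s
      = Real.exp (-((a + b + ∑ s : ι, (m s : ℝ) * f s) / c)) := by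
  have hprod : ∏ s : ι, Real.exp (-(f s) / c) ^ m s
      = Real.exp (∑ s : ι, (m s : ℝ) * (-(f s) / c)) := by
    rw [Real.exp_sum]
    exact Finset.prod_congr rfl fun s _ => by rw [Real.exp_nat_mul]
  rw [hprod, ← Real.exp_add, ← Real.exp_add]
  congr 1
  rw [show ∑ s : ι, (m s : ℝ) * (-(f s) / c) = (∑ s : ι, -((m s : ℝ) * f s)) / c by
    rw [Finset.sum_div]; exact Finset.sum_congr rfl fun s _ => by ring]
  rw [Finset.sum_neg_distrib]
  field_simp
  ring

/-- bound on `λ` (with `C_w := exp(−φ(γ,w)²/(2n))`). -/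
theorem stmt_6 (p : ℕ) (hp : 1 ≤ p) (β γ : Fin p → ℝ) (n : ℕ) (hn : 1 ≤ n)
    (u v t : BS p) (m : BS p → ℕ) :
    ‖(((n : ℂ) * B p β t / 2) *
        (-((Real.exp (-(phi p γ (u + t))^2 / (2*n)) : ℂ)) *
            (Real.exp (-(phi p γ (v + t))^2 / (2*n)) : ℂ) *
            ∏ s : BS p, ((Real.exp (-(phi p γ (s + t))^2 / (2*n)) : ℂ)) ^ (m s)
          + (Real.exp (-(phi p γ (u + pflip p t))^2 / (2*n)) : ℂ) *
            (Real.exp (-(phi p γ (v + pflip p t))^2 / (2*n)) : ℂ) *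
            ∏ s : BS p, ((Real.exp (-(phi p γ (s + pflip p t))^2 / (2*n)) : ℂ)) ^ (m s)))‖
    ≤ (1/4 : ℝ) * ‖B p β t‖ *
        (|(phi p γ (u + t))^2 - (phi p γ (u + pflip p t))^2| +
         |(phi p γ (v + t))^2 - (phi p γ (v + pflip p t))^2| +
         ∑ s : BS p, (m s : ℝ) * |(phi p γ (s + t))^2 - (phi p γ (s + pflip p t))^2|) := by
  have hnR : (0:ℝ) < (n:ℝ) := by exact_mod_cast hn
  have hc : (2*(n:ℝ)) ≠ 0 := by positivity
  set X : ℝ := (phi p γ (u + t))^2 + (phi p γ (v + t))^2 +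
      ∑ s : BS p, (m s : ℝ) * (phi p γ (s + t))^2 with hX
  set Y : ℝ := (phi p γ (u + pflip p t))^2 + (phi p γ (v + pflip p t))^2 +
      ∑ s : BS p, (m s : ℝ) * (phi p γ (s + pflip p t))^2 with hY
  have hEt := triple_exp ((phi p γ (u + t))^2) ((phi p γ (v + t))^2)
      (fun s => (phi p γ (s + t))^2) m (2*(n:ℝ)) hc
  have hEf := triple_exp ((phi p γ (u + pflip p t))^2) ((phi p γ (v + pflip p t))^2)
      (fun s => (phi p γ (s + pflip p t))^2) m (2*(n:ℝ)) hc
  have hcast :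
      (-((Real.exp (-(phi p γ (u + t))^2 / (2*n)) : ℂ)) *
            (Real.exp (-(phi p γ (v + t))^2 / (2*n)) : ℂ) *
            ∏ s : BS p, ((Real.exp (-(phi p γ (s + t))^2 / (2*n)) : ℂ)) ^ (m s)
          + (Real.exp (-(phi p γ (u + pflip p t))^2 / (2*n)) : ℂ) *
            (Real.exp (-(phi p γ (v + pflip p t))^2 / (2*n)) : ℂ) *
            ∏ s : BS p, ((Real.exp (-(phi p γ (s + pflip p t))^2 / (2*n)) : ℂ)) ^ (m s))
        = ((Real.exp (-(Y / (2*n))) - Real.exp (-(X / (2*n))) : ℝ) : ℂ) := by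
    have := hEt
    have := hEf
    rw [show Real.exp (-(Y / (2*n))) = _ from hEf.symm, show Real.exp (-(X / (2*n))) = _ from hEt.symm]
    push_cast
    ring
  rw [hcast, norm_mul, norm_div, norm_mul, Complex.norm_real, Real.norm_eq_abs, Complex.norm_natCast,
    Complex.norm_two]
  have hXnn : 0 ≤ X := by
    have : 0 ≤ ∑ s : BS p, (m s : ℝ) * (phi p γ (s + t))^2 :=
      Finset.sum_nonneg fun s _ => by positivity
    positivity
  have hYnn : 0 ≤ Y := by
    have : 0 ≤ ∑ s : BS p, (m s : ℝ) * (phi p γ (s + pflip p t))^2 :=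
      Finset.sum_nonneg fun s _ => by positivity
    positivity
  have hlip : |Real.exp (-(Y/(2*n))) - Real.exp (-(X/(2*n)))| ≤ |Y - X| / (2*n) := by
    have h1 := exp_lip (a := Y/(2*n)) (b := X/(2*n)) (by positivity) (by positivity)
    calc |Real.exp (-(Y/(2*n))) - Real.exp (-(X/(2*n)))| ≤ |Y/(2*n) - X/(2*n)| := h1
      _ = |Y - X| / (2*n) := by rw [div_sub_div_same, abs_div, _root_.abs_of_pos (show (0:ℝ) < 2*(n:ℝ) by positivity)]
  have htri : |Y - X| ≤
      |(phi p γ (u + t))^2 - (phi p γ (u + pflip p t))^2| +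
      |(phi p γ (v + t))^2 - (phi p γ (v + pflip p t))^2| +
      ∑ s : BS p, (m s : ℝ) * |(phi p γ (s + t))^2 - (phi p γ (s + pflip p t))^2| := by
    rw [hX, hY]
    have hsum : |∑ s : BS p, (m s : ℝ) * (phi p γ (s + pflip p t))^2
        - ∑ s : BS p, (m s : ℝ) * (phi p γ (s + t))^2|
        ≤ ∑ s : BS p, (m s : ℝ) * |(phi p γ (s + t))^2 - (phi p γ (s + pflip p t))^2| := by
      rw [← Finset.sum_sub_distrib]
      calc |∑ s : BS p, ((m s : ℝ) * (phi p γ (s + pflip p t))^2 - (m s : ℝ) * (phi p γ (s + t))^2)|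
          ≤ ∑ s : BS p, |(m s : ℝ) * (phi p γ (s + pflip p t))^2 - (m s : ℝ) * (phi p γ (s + t))^2| :=
            Finset.abs_sum_le_sum_abs _ _
        _ = ∑ s : BS p, (m s : ℝ) * |(phi p γ (s + t))^2 - (phi p γ (s + pflip p t))^2| := by
            refine Finset.sum_congr rfl fun s _ => ?_
            rw [← mul_sub, abs_mul, Nat.abs_cast, abs_sub_comm]
    have h1 : |(phi p γ (u + pflip p t))^2 - (phi p γ (u + t))^2|
        = |(phi p γ (u + t))^2 - (phi p γ (u + pflip p t))^2| := abs_sub_comm _ _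
    have h2 : |(phi p γ (v + pflip p t))^2 - (phi p γ (v + t))^2|
        = |(phi p γ (v + t))^2 - (phi p γ (v + pflip p t))^2| := abs_sub_comm _ _
    calc |((phi p γ (u + pflip p t))^2 + (phi p γ (v + pflip p t))^2 + ∑ s : BS p, (m s : ℝ) * (phi p γ (s + pflip p t))^2)
          - ((phi p γ (u + t))^2 + (phi p γ (v + t))^2 + ∑ s : BS p, (m s : ℝ) * (phi p γ (s + t))^2)|
        ≤ |(phi p γ (u + pflip p t))^2 - (phi p γ (u + t))^2| +
          |(phi p γ (v + pflip p t))^2 - (phi p γ (v + t))^2| +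
          |∑ s : BS p, (m s : ℝ) * (phi p γ (s + pflip p t))^2 - ∑ s : BS p, (m s : ℝ) * (phi p γ (s + t))^2| := by
            have := abs_add_le ((phi p γ (u + pflip p t))^2 - (phi p γ (u + t))^2 + ((phi p γ (v + pflip p t))^2 - (phi p γ (v + t))^2))
              (∑ s : BS p, (m s : ℝ) * (phi p γ (s + pflip p t))^2 - ∑ s : BS p, (m s : ℝ) * (phi p γ (s + t))^2)
            have h3 := abs_add_le ((phi p γ (u + pflip p t))^2 - (phi p γ (u + t))^2) ((phi p γ (v + pflip p t))^2 - (phi p γ (v + t))^2)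
            calc _ = |(phi p γ (u + pflip p t))^2 - (phi p γ (u + t))^2 + ((phi p γ (v + pflip p t))^2 - (phi p γ (v + t))^2) + (∑ s : BS p, (m s : ℝ) * (phi p γ (s + pflip p t))^2 - ∑ s : BS p, (m s : ℝ) * (phi p γ (s + t))^2)| := by congr 1; ring
              _ ≤ _ := by linarith
      _ ≤ _ := by rw [h1, h2]; linarith
  set S := |(phi p γ (u + t))^2 - (phi p γ (u + pflip p t))^2| +
      |(phi p γ (v + t))^2 - (phi p γ (v + pflip p t))^2| +
      ∑ s : BS p, (m s : ℝ) * |(phi p γ (s + t))^2 - (phi p γ (s + pflip p t))^2|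
  have hBnn : 0 ≤ ‖B p β t‖ := norm_nonneg _
  calc (n:ℝ) * ‖B p β t‖ / 2 * |Real.exp (-(Y/(2*n))) - Real.exp (-(X/(2*n)))|
      ≤ (n:ℝ) * ‖B p β t‖ / 2 * (|Y - X| / (2*n)) := by
        apply mul_le_mul_of_nonneg_left hlip (by positivity)
    _ = (1/4 : ℝ) * ‖B p β t‖ * |Y - X| := by field_simp; ring
    _ ≤ (1/4 : ℝ) * ‖B p β t‖ * S := by
        apply mul_le_mul_of_nonneg_left htri (by positivity)

end QAOA
end

section
/- Let n ≥ 1 be an integer and β ∈ ℝ. Let H_B be the 2^n × 2^n complex matrix, indexed by x, y ∈ {0,1}^n, given by H_B := ∑_{0≤k<n} X_k, where X_k has (x,y) entry equal to 1 if y equals x with bit k flipped and 0 otherwise. Then for all x, y ∈ {0,1}^n, the (x,y) entry of the matrix exponential exp(−i(β/2)H_B) equals (cos(β/2))^{|{k : x_k = y_k}|} · (−i·sin(β/2))^{|{k : x_k ≠ y_k}|}. -/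
open Complex Finset

namespace QAOA

/-- Computational basis states on `n` qubits: bitstrings of length `n`. -/
abbrev Q (n : ℕ) := Fin n → ZMod 2

/-- Pauli `X` on qubit `k`: entry `(x, y)` is `1` iff `y` equals `x` with bit `k` flipped. -/
def PauliX (n : ℕ) (k : Fin n) : Matrix (Q n) (Q n) ℂ :=
  fun x y => if y = Function.update x k (x k + 1) then 1 else 0

/-- The mixer Hamiltonian `H_B = ∑ₖ Xₖ`. -/
noncomputable def HB (n : ℕ) : Matrix (Q n) (Q n) ℂ := ∑ k : Fin n, PauliX n k

/-- Bit-flip on position `k`. -/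
def flip {n : ℕ} (k : Fin n) (x : Q n) : Q n := Function.update x k (x k + 1)

lemma pauli_apply {n : ℕ} (k : Fin n) (x y : Q n) :
    PauliX n k x y = if y = flip k x then 1 else 0 := rfl

lemma zmod2_add_one_ne (a : ZMod 2) : a + 1 ≠ a := by revert a; decide

lemma zmod2_ne_iff (a b : ZMod 2) : a ≠ b ↔ a + 1 = b := by revert b; revert a; decide

lemma flip_apply_ne {n : ℕ} (k j : Fin n) (x : Q n) (h : j ≠ k) : flip k x j = x j :=
  Function.update_of_ne h _ _

lemma flip_apply_self {n : ℕ} (k : Fin n) (x : Q n) : flip k x k = x k + 1 :=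
  Function.update_self _ _ _

lemma zmod2_aa (a : ZMod 2) : a + 1 + 1 = a := by revert a; decide

lemma flip_flip {n : ℕ} (k : Fin n) (x : Q n) : flip k (flip k x) = x := by
  funext j
  by_cases h : j = k
  · subst h; rw [flip_apply_self, flip_apply_self, zmod2_aa]
  · rw [flip_apply_ne _ _ _ h, flip_apply_ne _ _ _ h]

lemma flip_apply {n : ℕ} (k j : Fin n) (x : Q n) :
    flip k x j = if j = k then x k + 1 else x j := Function.update_apply _ _ _ _

lemma flip_comm {n : ℕ} (j k : Fin n) (x : Q n) : flip j (flip k x) = flip k (flip j x) := by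
  funext i
  simp only [flip_apply]
  split_ifs <;> (try subst_vars) <;> simp_all [zmod2_aa]

lemma pauli_mul_apply {n : ℕ} (k : Fin n) (M : Matrix (Q n) (Q n) ℂ) (x y : Q n) :
    (PauliX n k * M) x y = M (flip k x) y := by
  rw [Matrix.mul_apply]
  rw [Finset.sum_eq_single (flip k x)]
  · rw [pauli_apply, if_pos rfl, one_mul]
  · intro b _ hb
    rw [pauli_apply, if_neg hb, zero_mul]
  · intro h; exact absurd (Finset.mem_univ _) h

lemma pauli_sq {n : ℕ} (k : Fin n) : PauliX n k * PauliX n k = 1 := by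
  ext x y
  rw [pauli_mul_apply, pauli_apply, flip_flip, Matrix.one_apply]
  simp [eq_comm]

lemma pauli_commute {n : ℕ} (j k : Fin n) : Commute (PauliX n j) (PauliX n k) := by
  show _ = _
  ext x y
  rw [pauli_mul_apply, pauli_apply, pauli_mul_apply, pauli_apply, flip_comm]

lemma pauli_pow_even {n : ℕ} (k : Fin n) (m : ℕ) : PauliX n k ^ (2 * m) = 1 := by
  rw [pow_mul, sq, pauli_sq, one_pow]

lemma pauli_pow_odd {n : ℕ} (k : Fin n) (m : ℕ) : PauliX n k ^ (2 * m + 1) = PauliX n k := by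
  rw [pow_succ, pauli_pow_even, one_mul]

lemma exp_pauli {n : ℕ} (k : Fin n) (β : ℝ) :
    NormedSpace.exp ((-(Complex.I * (β / 2))) • PauliX n k) =
      (Real.cos (β / 2) : ℂ) • 1 + ((-Complex.I) * (Real.sin (β / 2) : ℂ)) • PauliX n k := by
  set a : ℂ := -(Complex.I * (β / 2)) with ha
  set X := PauliX n k with hX
  have hasq : a ^ 2 = -(((β / 2 : ℝ) : ℂ) ^ 2) := by
    rw [ha]
    rw [neg_pow, mul_pow, Complex.I_sq]
    push_cast
    ring
  have ha2 : ∀ m : ℕ, a ^ (2 * m) = (-1 : ℂ) ^ m * ((β / 2 : ℝ) : ℂ) ^ (2 * m) := by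
    intro m
    rw [pow_mul, hasq, neg_eq_neg_one_mul, mul_pow, pow_mul]
  have hodd : ∀ m : ℕ, a ^ (2 * m + 1) =
      (-Complex.I) * ((-1 : ℂ) ^ m * ((β / 2 : ℝ) : ℂ) ^ (2 * m + 1)) := by
    intro m
    rw [pow_succ, ha2, ha]
    push_cast
    ring
  rw [NormedSpace.exp_eq_tsum ℂ]
  refine HasSum.tsum_eq ?_
  have hc : HasSum (fun m : ℕ => ((2 * m).factorial : ℂ)⁻¹ • (a • X) ^ (2 * m))
      ((Real.cos (β / 2) : ℂ) • (1 : Matrix (Q n) (Q n) ℂ)) := by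
    have h1 := (Complex.hasSum_cos ((β / 2 : ℝ) : ℂ)).smul_const (1 : Matrix (Q n) (Q n) ℂ)
    rw [Complex.ofReal_cos]
    convert h1 using 2 with m
    rw [smul_pow, pauli_pow_even, smul_smul, ha2]
    congr 1
    field_simp
  have hs : HasSum (fun m : ℕ => ((2 * m + 1).factorial : ℂ)⁻¹ • (a • X) ^ (2 * m + 1))
      (((-Complex.I) * (Real.sin (β / 2) : ℂ)) • X) := by
    have h1 := (((Complex.hasSum_sin ((β / 2 : ℝ) : ℂ)).mul_left (-Complex.I)).smul_const X)
    rw [Complex.ofReal_sin]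
    convert h1 using 2 with m
    rw [smul_pow, pauli_pow_odd, smul_smul, hodd]
    congr 1
    field_simp
  exact HasSum.even_add_odd hc hs

lemma commA {n : ℕ} (c d : ℂ) (j k : Fin n) :
    Commute (c • 1 + d • PauliX n j) (c • 1 + d • PauliX n k) := by
  apply Commute.add_left <;> apply Commute.add_right
  · exact (Commute.one_left _).smul_left c |>.smul_right c
  · exact (Commute.one_left _).smul_left c |>.smul_right d
  · exact (Commute.one_right _).smul_left d |>.smul_right c
  · exact ((pauli_commute j k).smul_left d).smul_right d

lemma prod_entry {n : ℕ} (c d : ℂ) (s : Finset (Fin n)) (x y : Q n) :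
    s.noncommProd (fun k => c • 1 + d • PauliX n k)
        (fun a _ b _ _ => commA c d a b) x y =
      if ∀ k, k ∉ s → x k = y k then ∏ k ∈ s, (if x k = y k then c else d) else 0 := by
  induction s using Finset.induction_on generalizing x with
  | empty =>
    generalize_proofs hp
    rw [Finset.noncommProd_empty]
    simp only [Finset.notMem_empty, not_false_iff, forall_true_left, Finset.prod_empty]
    rw [Matrix.one_apply]
    congr 1
    · simp [funext_iff]
  | @insert j s hj ih =>
    generalize_proofs hp
    rw [Finset.noncommProd_insert_of_notMem _ _ _ _ hj]
    rw [Matrix.add_mul, Matrix.smul_mul, Matrix.smul_mul, Matrix.one_mul,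
      Matrix.add_apply, Matrix.smul_apply, Matrix.smul_apply, pauli_mul_apply]
    rw [ih x, ih (flip j x)]
    have hprod : ∀ z : Q n, (∀ k ∈ s, z k = x k) →
        ∏ k ∈ s, (if z k = y k then c else d) = ∏ k ∈ s, (if x k = y k then c else d) := by
      intro z hz
      exact Finset.prod_congr rfl fun k hk => by rw [hz k hk]
    have hfl : ∀ k ∈ s, flip j x k = x k := fun k hk =>
      flip_apply_ne _ _ _ (fun h => hj (h ▸ hk))
    by_cases hxy : x j = y j
    · have h2 : ¬ (∀ k, k ∉ s → flip j x k = y k) := by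
        intro h
        have := h j hj
        rw [flip_apply_self, ← hxy] at this
        exact zmod2_add_one_ne _ this
      rw [if_neg h2, smul_zero, add_zero]
      have h3 : (∀ k, k ∉ s → x k = y k) ↔ (∀ k, k ∉ insert j s → x k = y k) := by
        constructor
        · intro h k hk; exact h k (fun hks => hk (Finset.mem_insert_of_mem hks))
        · intro h k hk
          by_cases hkj : k = j
          · subst hkj; exact hxy
          · exact h k (by simp [hkj, hk])
      rw [Finset.prod_insert hj, if_pos hxy]
      by_cases h4 : ∀ k, k ∉ insert j s → x k = y k
      · rw [if_pos (h3.mpr h4), if_pos h4, smul_eq_mul]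
      · rw [if_neg (fun h => h4 (h3.mp h)), if_neg h4, smul_eq_mul, mul_zero]
    · have h2 : ¬ (∀ k, k ∉ s → x k = y k) := fun h => hxy (h j hj)
      rw [if_neg h2, smul_zero, zero_add]
      have h3 : (∀ k, k ∉ s → flip j x k = y k) ↔ (∀ k, k ∉ insert j s → x k = y k) := by
        constructor
        · intro h k hk
          have hkj : k ≠ j := fun hc => hk (hc ▸ Finset.mem_insert_self j s)
          have := h k (fun hks => hk (Finset.mem_insert_of_mem hks))
          rwa [flip_apply_ne _ _ _ hkj] at this
        · intro h k hk
          by_cases hkj : k = j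
          · subst hkj
            rw [flip_apply_self]
            exact (zmod2_ne_iff _ _).mp hxy
          · rw [flip_apply_ne _ _ _ hkj]
            exact h k (by simp [hkj, hk])
      rw [Finset.prod_insert hj, if_neg hxy]
      by_cases h4 : ∀ k, k ∉ insert j s → x k = y k
      · rw [if_pos (h3.mpr h4), if_pos h4, hprod _ hfl, smul_eq_mul]
      · rw [if_neg (fun h => h4 (h3.mp h)), if_neg h4, smul_eq_mul, mul_zero]

/-- entries of `exp(−i(β/2)H_B)`. -/
theorem stmt_7 (n : ℕ) (hn : 1 ≤ n) (β : ℝ) (x y : Q n) :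
    NormedSpace.exp ((-(Complex.I * (β / 2))) • HB n) x y =
      (Real.cos (β / 2) : ℂ) ^ (Finset.univ.filter (fun k : Fin n => x k = y k)).card *
        ((-Complex.I) * (Real.sin (β / 2) : ℂ)) ^
          (Finset.univ.filter (fun k : Fin n => x k ≠ y k)).card := by
  set c : ℂ := (Real.cos (β / 2) : ℂ)
  set d : ℂ := (-Complex.I) * (Real.sin (β / 2) : ℂ)
  have hsum : (-(Complex.I * (β / 2))) • HB n =
      ∑ k : Fin n, (-(Complex.I * (β / 2))) • PauliX n k := by
    rw [HB, Finset.smul_sum]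
  rw [hsum]
  have hcomm : ((Finset.univ : Finset (Fin n)) : Set (Fin n)).Pairwise
      (Function.onFun Commute fun k => (-(Complex.I * (β / 2))) • PauliX n k) := by
    intro a _ b _ _
    exact ((pauli_commute a b).smul_left _).smul_right _
  rw [Matrix.exp_sum_of_commute Finset.univ _ hcomm]
  rw [Finset.noncommProd_congr rfl (fun k _ => exp_pauli k β)
    (fun a _ b _ _ => by
      simp only [Function.onFun]
      rw [exp_pauli a β, exp_pauli b β]; exact commA c d a b)]
  rw [prod_entry]
  rw [if_pos (fun k hk => absurd (Finset.mem_univ k) hk)]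
  rw [Finset.prod_ite (fun _ => c) (fun _ => d), Finset.prod_const, Finset.prod_const]

end QAOA
end

section
/- Let p ≥ 1 and β, γ ∈ ℝ^p. For each real d ≥ 2 let (R_s(d))_{s∈{0,1}^{2p+1}} be defined by the R-recursion with degree parameter d and angles (β, γ/√d), and let (R̃_s)_{s∈{0,1}^{2p+1}} be defined by the SK recursion with angles (β, γ). Then there exists a constant C > 0 such that for all real d ≥ 2 and all bitstrings s ∈ {0,1}^{2p+1}, |R_s(d) − R̃_s| ≤ C/d. -/
open Complex Finset

namespace QAOA

/-- The state `|+⟩` with all entries `2^{-n/2}`. -/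
noncomputable def plusState (n : ℕ) : Q n → ℂ := fun _ => (((2 : ℝ) ^ (-(n : ℝ) / 2) : ℝ) : ℂ)

/-- The level-`p` QAOA state
`e^{−iβ_{p−1}H_B/2} e^{−iγ_{p−1}H_C/2} ⋯ e^{−iβ_0 H_B/2} e^{−iγ_0 H_C/2} |+⟩`. -/
noncomputable def qaoaState (n p : ℕ) (Hc : Matrix (Q n) (Q n) ℂ) (β γ : Fin p → ℝ) : Q n → ℂ :=
  ((List.ofFn (fun j : Fin p =>
      NormedSpace.exp ((-(Complex.I * ((β j : ℂ) / 2))) • HB n) *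
      NormedSpace.exp ((-(Complex.I * ((γ j : ℂ) / 2))) • Hc))).reverse.prod).mulVec
    (plusState n)

/-- The energy `⟨ψ|H_C|ψ⟩`. -/
noncomputable def energy (n : ℕ) (Hc : Matrix (Q n) (Q n) ℂ) (ψ : Q n → ℂ) : ℂ :=
  ∑ x, (starRingEnd ℂ) (ψ x) * Hc.mulVec ψ x

/-- `D`-element subsets of `{0, …, n−1}`. -/
abbrev DSub (n D : ℕ) := {S : Finset (Fin n) // S.card = D}

/-- `D`-spin problem Hamiltonian: diagonal with entry `∑_S J_S ∏_{k ∈ S} (−1)^{x_k}`. -/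
noncomputable def HCspin (n D : ℕ) (J : DSub n D → ℝ) : Matrix (Q n) (Q n) ℂ :=
  Matrix.diagonal (fun x => ((∑ S : DSub n D, J S * ∏ k ∈ S.1, sgnR (x k) : ℝ) : ℂ))

/-- All tuples of nonnegative integers indexed by `κ` summing to `D`. -/
def tuples (κ : Type*) [Fintype κ] [DecidableEq κ] (D : ℕ) : Finset (κ → ℕ) :=
  (Fintype.piFinset (fun _ : κ => Finset.range (D + 1))).filter (fun g => ∑ s, g s = D)

/-- Ordered pairs `k < l`, representing the 2-element subsets of `{0, …, n−1}`. -/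
abbrev Pair (n : ℕ) := {e : Fin n × Fin n // e.1 < e.2}

/-- MaxCut-type problem Hamiltonian: diagonal with entry `∑_{k<l} J_{kl} (−1)^{x_k}(−1)^{x_l}`. -/
noncomputable def HCpair (n : ℕ) (J : Pair n → ℝ) : Matrix (Q n) (Q n) ℂ :=
  Matrix.diagonal (fun x => ((∑ e : Pair n, J e * sgnR (x e.1.1) * sgnR (x e.1.2) : ℝ) : ℂ))

/-- The quantities `R_s`, defined by downward recursion on the level of symmetry:
for `L(s) ∈ {p−1, p}` (where the second factor is `1`),
`R_s = exp(−d(1 − (1/2)∑_{t : L(t)=p} (−1)^{1[t odd]} B_{β,t} e^{iφ(γ, s⊕t)}))`,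
and for `L(s) ≤ p−2` there is the extra factor
`exp((d/2) ∑_{t : L(s)<L(t)<p} (−1)^{1[t odd]} B_{β,t} R_t e^{iφ(γ, s⊕t)})`. -/
noncomputable def Rrec (p : ℕ) (d : ℝ) (β γ : Fin p → ℝ) : BS p → ℂ
  | s =>
    Complex.exp (-(d : ℂ) * (1 - (1/2 : ℂ) *
        ∑ t ∈ Finset.univ.filter (fun t : BS p => L p t = p),
          sgn p t * B p β t * Complex.exp (Complex.I * (phi p γ (s + t) : ℝ)))) *
    (if L p s + 2 ≤ p then
      Complex.exp (((d : ℂ) / 2) *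
        ∑ t ∈ (Finset.univ.filter (fun t : BS p => L p s < L p t ∧ L p t < p)).attach,
          sgn p t.1 * B p β t.1 * Rrec p d β γ t.1 *
            Complex.exp (Complex.I * (phi p γ (s + t.1) : ℝ)))
      else 1)
  termination_by s => p - L p s
  decreasing_by
    have ht := (Finset.mem_filter.mp t.2).2
    show p - L p t.1 < p - L p s
    omega


/-- The quantities `R̃_s` of the SK recursion: for `L(s) ∈ {p−1, p}` (second factor `1`),
`R̃_s = exp(−(1/4)∑_{t : L(t)=p} (−1)^{1[t odd]} B_{β,t} φ(γ, s⊕t)²)`, and for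
`L(s) ≤ p−2` there is the extra factor
`exp(−(1/4)∑_{t : L(s)<L(t)<p} (−1)^{1[t odd]} B_{β,t} φ(γ, s⊕t)² R̃_t)`. -/
noncomputable def Rsk (p : ℕ) (β γ : Fin p → ℝ) : BS p → ℂ
  | s =>
    Complex.exp (-(1/4 : ℂ) *
        ∑ t ∈ Finset.univ.filter (fun t : BS p => L p t = p),
          sgn p t * B p β t * ((phi p γ (s + t) : ℝ) : ℂ) ^ 2) *
    (if L p s + 2 ≤ p then
      Complex.exp (-(1/4 : ℂ) *
        ∑ t ∈ (Finset.univ.filter (fun t : BS p => L p s < L p t ∧ L p t < p)).attach,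
          sgn p t.1 * B p β t.1 * ((phi p γ (s + t.1) : ℝ) : ℂ) ^ 2 * Rsk p β γ t.1)
      else 1)
  termination_by s => p - L p s
  decreasing_by
    have ht := (Finset.mem_filter.mp t.2).2
    show p - L p t.1 < p - L p s
    omega

-- basic bit lemmas
lemma bit_def {p n : ℕ} (s : BS p) (h : n < 2*p+1) : bit p s n = s ⟨n, h⟩ := by
  simp [bit, Nat.mod_eq_of_lt h]

lemma bit_coe {p : ℕ} (s : BS p) (n : Fin (2*p+1)) : bit p s (n : ℕ) = s n := by
  rw [bit_def s n.2]

lemma bit_add {p : ℕ} (s t : BS p) (n : ℕ) : bit p (s + t) n = bit p s n + bit p t n := rfl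

lemma bit_one {p : ℕ} (n : ℕ) : bit p (1 : BS p) n = 1 := rfl

-- L lemmas
lemma L_le {p : ℕ} (s : BS p) : L p s ≤ p := Nat.findGreatest_le _

lemma sym_of_le {p : ℕ} (s : BS p) {k : ℕ} (hk : k ≤ L p s) :
    bit p s (p + k) = bit p s (p - k) := by
  rcases Nat.eq_zero_or_pos (L p s) with h | h
  · have : k = 0 := by omega
    subst this; simp
  · have hP : ∀ k ≤ L p s, bit p s (p + k) = bit p s (p - k) := by
      have := (Nat.findGreatest_eq_iff.1 (rfl : L p s = L p s)).2.1
      exact this (by omega)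
    exact hP k hk

lemma not_sym {p : ℕ} (s : BS p) (h : L p s < p) :
    bit p s (p + (L p s + 1)) ≠ bit p s (p - (L p s + 1)) := by
  have h3 := (Nat.findGreatest_eq_iff.1 (rfl : L p s = L p s)).2.2
    (Nat.lt_succ_self _) (by omega)
  push_neg at h3
  obtain ⟨k, hk, hne⟩ := h3
  rcases Nat.lt_or_ge k (L p s + 1) with hlt | hge
  · exact absurd (sym_of_le s (by omega)) hne
  · have : k = L p s + 1 := le_antisymm hk hge
    subst this; exact hne

lemma L_eq {p : ℕ} (s : BS p) (m : ℕ) (hm : m ≤ p)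
    (h1 : ∀ k ≤ m, bit p s (p + k) = bit p s (p - k))
    (h2 : m < p → bit p s (p + (m+1)) ≠ bit p s (p - (m+1))) : L p s = m := by
  rw [L, Nat.findGreatest_eq_iff]
  refine ⟨hm, fun _ => h1, fun n hn hnp hP => ?_⟩
  exact h2 (by omega) (hP (m+1) (by omega))

lemma L_congr {p : ℕ} (s t : BS p)
    (h : ∀ k ≤ p, (bit p s (p+k) = bit p s (p-k) ↔ bit p t (p+k) = bit p t (p-k))) :
    L p s = L p t := by
  refine L_eq s (L p t) (L_le t) (fun k hk => ?_) (fun hp => ?_)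
  · exact (h k (le_trans hk (L_le t))).2 (sym_of_le t hk)
  · intro he
    exact not_sym t hp ((h _ (by omega)).1 he)


-- chunk 2: add-one lemmas
lemma z2_add_self : ∀ a : ZMod 2, a + a = 0 := by decide
lemma add_one_add_one {p : ℕ} (s : BS p) : s + 1 + 1 = s := by
  funext j; show s j + 1 + 1 = s j
  have : ∀ a : ZMod 2, a + 1 + 1 = a := by decide
  exact this _
lemma add_one_ne {p : ℕ} (s : BS p) : s + 1 ≠ s := by
  intro h
  have := congrFun h ⟨0, by omega⟩
  simp only [Pi.add_apply, Pi.one_apply] at this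
  have h2 : ∀ a : ZMod 2, ¬ (a + 1 = a) := by decide
  exact h2 _ this

lemma L_add_one {p : ℕ} (s : BS p) : L p (s + 1) = L p s := by
  refine L_congr _ _ (fun k _ => ?_)
  simp only [bit_add, bit_one]
  exact add_left_inj 1

lemma IsOdd_add_one {p : ℕ} (s : BS p) : IsOdd p (s + 1) ↔ IsOdd p s := by
  unfold IsOdd; simp only [bit_add, bit_one]
  constructor <;> intro h h2 <;> [exact h (by rw [h2]); exact h (add_right_cancel h2)]

lemma sgn_add_one {p : ℕ} (s : BS p) : sgn p (s + 1) = sgn p s := by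
  unfold sgn; simp only [IsOdd_add_one]

lemma B_add_one {p : ℕ} (β : Fin p → ℝ) (s : BS p) : B p β (s + 1) = B p β s := by
  unfold B
  refine Finset.prod_congr rfl (fun j _ => ?_)
  have key : ∀ a b : ℕ, (bit p (s+1) a = bit p (s+1) b) ↔ (bit p s a = bit p s b) := by
    intro a b; simp only [bit_add, bit_one]; exact add_left_inj 1
  simp only [key, ne_eq]

lemma sgnR_add_one (b : ZMod 2) : sgnR (b + 1) = - sgnR b := by
  have : b = 0 ∨ b = 1 := by revert b; decide
  rcases this with h | h <;> subst h <;>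
    simp [sgnR, show (1:ZMod 2)+1 = 0 by decide, show (1:ZMod 2) ≠ 0 by decide]

lemma phi_add_one {p : ℕ} (γ : Fin p → ℝ) (w : BS p) : phi p γ (w + 1) = - phi p γ w := by
  unfold phi
  rw [← Finset.sum_neg_distrib]
  refine Finset.sum_congr rfl (fun j _ => ?_)
  simp only [bit_add, bit_one, sgnR_add_one]
  ring

lemma phi_div {p : ℕ} (γ : Fin p → ℝ) (c : ℝ) (w : BS p) :
    phi p (fun j => γ j / c) w = phi p γ w / c := by
  unfold phi
  rw [Finset.sum_div]
  refine Finset.sum_congr rfl (fun j _ => ?_)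
  ring

lemma phi_add_comm {p : ℕ} (γ : Fin p → ℝ) (s t : BS p) :
    phi p γ (s + (t + 1)) = - phi p γ (s + t) := by
  rw [show s + (t + 1) = (s + t) + 1 by ring, phi_add_one]


-- chunk 3 : pflip lemmas
lemma bit_pflip_in {p n : ℕ} (s : BS p) (h1 : p - L p s ≤ n) (h2 : n ≤ p + L p s)
    (h3 : n < 2*p+1) : bit p (pflip p s) n = bit p s n + 1 := by
  unfold pflip bit
  simp [Nat.mod_eq_of_lt h3, h1, h2]

lemma bit_pflip_out {p n : ℕ} (s : BS p) (h : ¬(p - L p s ≤ n ∧ n ≤ p + L p s))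
    (h3 : n < 2*p+1) : bit p (pflip p s) n = bit p s n := by
  unfold pflip bit
  simp only [Nat.mod_eq_of_lt h3]
  rw [if_neg h]

lemma L_pflip {p : ℕ} (s : BS p) : L p (pflip p s) = L p s := by
  have hLp := L_le s
  refine L_eq _ (L p s) hLp (fun k hk => ?_) (fun hlt => ?_)
  · rw [bit_pflip_in s (by omega) (by omega) (by omega),
      bit_pflip_in s (by omega) (by omega) (by omega), sym_of_le s hk]
  · rw [bit_pflip_out s (by omega) (by omega), bit_pflip_out s (by omega) (by omega)]
    exact not_sym s hlt

lemma IsOdd_pflip {p : ℕ} (s : BS p) (h : L p s < p) : IsOdd p (pflip p s) ↔ ¬ IsOdd p s := by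
  unfold IsOdd
  rw [bit_pflip_out s (by omega) (by omega), bit_pflip_in s (by omega) (by omega) (by omega)]
  have : ∀ a b : ZMod 2, (a ≠ b + 1) ↔ ¬(a ≠ b) := by decide
  exact this _ _

lemma sgn_pflip {p : ℕ} (s : BS p) (h : L p s < p) : sgn p (pflip p s) = - sgn p s := by
  by_cases ho : IsOdd p s <;> simp [sgn, IsOdd_pflip s h, ho]

lemma pflip_pflip {p : ℕ} (s : BS p) : pflip p (pflip p s) = s := by
  funext j
  show (if p - L p (pflip p s) ≤ (j:ℕ) ∧ (j:ℕ) ≤ p + L p (pflip p s) then pflip p s j + 1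
    else pflip p s j) = s j
  rw [L_pflip]
  have hz : ∀ a : ZMod 2, a + 1 + 1 = a := by decide
  by_cases hc : p - L p s ≤ (j:ℕ) ∧ (j:ℕ) ≤ p + L p s
  · rw [if_pos hc]; show (if _ then s j + 1 else s j) + 1 = s j; rw [if_pos hc]; exact hz _
  · rw [if_neg hc]; show (if _ then s j + 1 else s j) = s j; rw [if_neg hc]

lemma pflip_ne {p : ℕ} (s : BS p) : pflip p s ≠ s := by
  intro h
  have h2 : bit p (pflip p s) p = bit p s p := by rw [h]
  rw [bit_pflip_in s (by omega) (by omega) (by omega)] at h2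
  have : ∀ a : ZMod 2, ¬(a + 1 = a) := by decide
  exact this _ h2

lemma factor_helper (cc ss : ℂ) (x y z : ZMod 2) (hzx : z ≠ x) :
    cc ^ ((if x = y + 1 then 1 else 0) + (if z = y + 1 then 1 else 0)) *
      ss ^ ((if x ≠ y + 1 then 1 else 0) + (if z ≠ y + 1 then 1 else 0)) =
    cc ^ ((if x = y then 1 else 0) + (if z = y then 1 else 0)) *
      ss ^ ((if x ≠ y then 1 else 0) + (if z ≠ y then 1 else 0)) := by
  have key : ∀ x y z : ZMod 2, z ≠ x →
      ((if x = y + 1 then (1:ℕ) else 0) + (if z = y + 1 then 1 else 0) =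
        (if x = y then 1 else 0) + (if z = y then 1 else 0)) ∧
      ((if x ≠ y + 1 then (1:ℕ) else 0) + (if z ≠ y + 1 then 1 else 0) =
        (if x ≠ y then 1 else 0) + (if z ≠ y then 1 else 0)) := by decide
  rw [(key x y z hzx).1, (key x y z hzx).2]

lemma B_pflip {p : ℕ} (β : Fin p → ℝ) (s : BS p) (h : L p s < p) :
    B p β (pflip p s) = B p β s := by
  unfold B
  refine Finset.prod_congr rfl (fun j _ => ?_)
  have hj := j.2
  set jn := (j : ℕ) with hjn
  by_cases hA : p - L p s ≤ jn
  · rw [bit_pflip_in s (by omega) (by omega) (by omega),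
      bit_pflip_in s (by omega) (by omega) (by omega),
      bit_pflip_in (n := 2*p - jn) s (by omega) (by omega) (by omega),
      bit_pflip_in (n := 2*p - jn - 1) s (by omega) (by omega) (by omega)]
    simp only [ne_eq, add_left_inj]
  · by_cases hB : p - L p s ≤ jn + 1
    · -- boundary case: jn = p - L s - 1
      rw [bit_pflip_out (n := jn) s (by omega) (by omega),
        bit_pflip_in (n := jn + 1) s (by omega) (by omega) (by omega),
        bit_pflip_out (n := 2*p - jn) s (by omega) (by omega),
        bit_pflip_in (n := 2*p - jn - 1) s (by omega) (by omega) (by omega)]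
      have hzx := not_sym s h
      rw [show p + (L p s + 1) = 2*p - jn by omega,
        show p - (L p s + 1) = jn by omega] at hzx
      have hwy := sym_of_le s (le_refl (L p s))
      rw [show p + L p s = 2*p - jn - 1 by omega,
        show p - L p s = jn + 1 by omega] at hwy
      rw [hwy]
      exact factor_helper _ _ _ _ _ hzx
    · rw [bit_pflip_out (n := jn) s (by omega) (by omega),
        bit_pflip_out (n := jn + 1) s (by omega) (by omega),
        bit_pflip_out (n := 2*p - jn) s (by omega) (by omega),
        bit_pflip_out (n := 2*p - jn - 1) s (by omega) (by omega)]

lemma phi_pflip {p : ℕ} (γ : Fin p → ℝ) (s t : BS p) (hst : L p s < L p t) :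
    phi p γ (pflip p s + t) = phi p γ (s + t) := by
  have hsp : L p s < p := lt_of_lt_of_le hst (L_le t)
  unfold phi
  refine Finset.sum_congr rfl (fun j _ => ?_)
  have hj := j.2
  set jn := (j : ℕ) with hjn
  by_cases hc : p - L p s ≤ jn
  · -- both terms vanish
    have hts : bit p t (2*p - jn) = bit p t jn := by
      have := sym_of_le t (k := p - jn) (by omega)
      rw [show p + (p - jn) = 2*p - jn by omega, show p - (p - jn) = jn by omega] at this
      exact this
    have hss : bit p s (2*p - jn) = bit p s jn := by
      have := sym_of_le s (k := p - jn) (by omega)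
      rw [show p + (p - jn) = 2*p - jn by omega, show p - (p - jn) = jn by omega] at this
      exact this
    rw [bit_add, bit_add, bit_add, bit_add,
      bit_pflip_in (n := jn) s (by omega) (by omega) (by omega),
      bit_pflip_in (n := 2*p - jn) s (by omega) (by omega) (by omega), hts, hss]
    ring
  · rw [bit_add, bit_add, bit_add, bit_add,
      bit_pflip_out (n := jn) s (by omega) (by omega),
      bit_pflip_out (n := 2*p - jn) s (by omega) (by omega)]


-- chunk 4 : the sum identity
noncomputable def chi (x : ZMod 2) : ℂ := if x = 0 then 1 else -1

lemma zm2 (x : ZMod 2) : x = 0 ∨ x = 1 := by revert x; decide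

lemma chi_add (x y : ZMod 2) : chi (x + y) = chi x * chi y := by
  rcases zm2 x with h | h <;> rcases zm2 y with h' | h' <;> subst h <;> subst h'
  · simp [chi]
  · simp [chi, show (1:ZMod 2) ≠ 0 by decide]
  · simp [chi, show (1:ZMod 2) ≠ 0 by decide]
  · rw [show (1:ZMod 2)+1 = 0 by decide]
    simp [chi, show (1:ZMod 2) ≠ 0 by decide]

lemma chi_sum {ι : Type*} (T : Finset ι) (f : ι → ZMod 2) :
    chi (∑ j ∈ T, f j) = ∏ j ∈ T, chi (f j) := by
  classical
  induction T using Finset.cons_induction with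
  | empty => simp [chi]
  | cons a T ha ih => rw [Finset.sum_cons, Finset.prod_cons, chi_add, ih]

lemma sgn_eq_chi {p : ℕ} (t : BS p) : sgn p t = chi (bit p t 0 + bit p t p) := by
  unfold sgn chi
  have : ∀ a b : ZMod 2, (a + b = 0) ↔ (a = b) := by decide
  by_cases h : bit p t 0 = bit p t p
  · rw [if_neg (show ¬ IsOdd p t from fun h' => h' h), if_pos ((this _ _).2 h)]
  · rw [if_pos (show IsOdd p t from h), if_neg (fun hc => h ((this _ _).1 hc))]

lemma telescope {p : ℕ} (t : BS p) :
    bit p t 0 + bit p t p = ∑ j : Fin p, (bit p t (j:ℕ) + bit p t ((j:ℕ)+1)) := by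
  have : ∀ n, (fun j : Fin n => bit p t (j:ℕ) + bit p t ((j:ℕ)+1)) =
      (fun j : Fin n => (fun i => bit p t i + bit p t (i+1)) (j:ℕ)) := fun n => rfl
  rw [Fin.sum_univ_eq_sum_range (fun i => bit p t i + bit p t (i+1))]
  have key : ∀ a b : ZMod 2, a + b = b - a := by decide
  have : ∑ i ∈ Finset.range p, (bit p t i + bit p t (i+1)) =
      ∑ i ∈ Finset.range p, (bit p t (i+1) - bit p t i) := by
    refine Finset.sum_congr rfl (fun i _ => key _ _)
  rw [this, Finset.sum_range_sub (fun n => bit p t n), key]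

noncomputable def vv {p : ℕ} (β : Fin p → ℝ) (j : Fin p) (x : ZMod 2) : ℂ :=
  if x = 0 then ((Real.cos (β j / 2) : ℂ))^2 else ((Real.sin (β j / 2) : ℂ))^2

lemma sgnB_eq {p : ℕ} (β : Fin p → ℝ) (t : BS p) (ht : L p t = p) :
    sgn p t * B p β t = ∏ j : Fin p, vv β j (bit p t (j:ℕ) + bit p t ((j:ℕ)+1)) := by
  rw [sgn_eq_chi, telescope, chi_sum, B, ← Finset.prod_mul_distrib]
  refine Finset.prod_congr rfl (fun j _ => ?_)
  have hj := j.2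
  have e1 : bit p t (2*p - (j:ℕ)) = bit p t (j:ℕ) := by
    have := sym_of_le t (k := p - (j:ℕ)) (by omega)
    rw [show p + (p - (j:ℕ)) = 2*p - (j:ℕ) by omega,
      show p - (p - (j:ℕ)) = (j:ℕ) by omega] at this
    exact this
  have e2 : bit p t (2*p - (j:ℕ) - 1) = bit p t ((j:ℕ)+1) := by
    have := sym_of_le t (k := p - (j:ℕ) - 1) (by omega)
    rw [show p + (p - (j:ℕ) - 1) = 2*p - (j:ℕ) - 1 by omega,
      show p - (p - (j:ℕ) - 1) = (j:ℕ)+1 by omega] at this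
    exact this
  rw [e1, e2]
  by_cases hc : bit p t (j:ℕ) = bit p t ((j:ℕ)+1)
  · have hz : bit p t (j:ℕ) + bit p t ((j:ℕ)+1) = 0 := by
      rw [hc]; exact (by decide : ∀ a : ZMod 2, a + a = 0) _
    rw [hz]
    simp [chi, vv, hc]
    try ring
  · have hz : bit p t (j:ℕ) + bit p t ((j:ℕ)+1) ≠ 0 := by
      intro hcon
      exact hc ((by decide : ∀ a b : ZMod 2, a + b = 0 → a = b) _ _ hcon)
    have ho : bit p t (j:ℕ) + bit p t ((j:ℕ)+1) = 1 := by
      have : ∀ a b : ZMod 2, a ≠ b → a + b = 1 := by decide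
      exact this _ _ hc
    rw [ho]
    simp [chi, vv, hc, show ((1:ZMod 2) = 0) = False by simp]
    rw [mul_pow, Complex.I_sq]
    ring

-- partial sums construction
noncomputable def G {p : ℕ} (g : Fin p → ZMod 2) (j : ℕ) : ZMod 2 :=
  if h : j < p then g ⟨j, h⟩ else 0

noncomputable def PSext (p : ℕ) (a : ZMod 2) (g : Fin p → ZMod 2) : BS p :=
  fun n => a + ∑ j ∈ Finset.range (min (n:ℕ) (2*p - (n:ℕ))), G g j

lemma bit_PSext {p n : ℕ} (a : ZMod 2) (g : Fin p → ZMod 2) (h : n < 2*p+1) :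
    bit p (PSext p a g) n = a + ∑ j ∈ Finset.range (min n (2*p - n)), G g j := by
  rw [bit_def _ h]; rfl

lemma L_PSext {p : ℕ} (a : ZMod 2) (g : Fin p → ZMod 2) : L p (PSext p a g) = p := by
  refine L_eq _ p le_rfl (fun k hk => ?_) (fun h => absurd h (lt_irrefl p))
  rw [bit_PSext a g (by omega), bit_PSext a g (by omega),
    show min (p+k) (2*p - (p+k)) = p - k by omega, show min (p-k) (2*p-(p-k)) = p - k by omega]

lemma PSext_leftinv {p : ℕ} (t : BS p) (ht : L p t = p) :
    PSext p (bit p t 0) (fun j => bit p t (j:ℕ) + bit p t ((j:ℕ)+1)) = t := by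
  have key : ∀ i, i ≤ p → bit p t 0 + ∑ j ∈ Finset.range i,
      G (fun j : Fin p => bit p t (j:ℕ) + bit p t ((j:ℕ)+1)) j = bit p t i := by
    intro i
    induction i with
    | zero => simp
    | succ i ih =>
      intro hi
      rw [Finset.sum_range_succ, ← add_assoc, ih (by omega), G, dif_pos (by omega)]
      exact (by decide : ∀ a b : ZMod 2, a + (a + b) = b) _ _
  funext n
  have hn := n.2
  have : bit p (PSext p (bit p t 0) (fun j => bit p t (j:ℕ) + bit p t ((j:ℕ)+1))) (n:ℕ)
      = bit p t (n:ℕ) := by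
    rw [bit_PSext _ _ (by omega)]
    by_cases hc : (n:ℕ) ≤ p
    · rw [show min (n:ℕ) (2*p - (n:ℕ)) = (n:ℕ) by omega]; exact key _ hc
    · rw [show min (n:ℕ) (2*p - (n:ℕ)) = 2*p - (n:ℕ) by omega, key _ (by omega)]
      have := sym_of_le t (k := (n:ℕ) - p) (by omega)
      rw [show p + ((n:ℕ) - p) = (n:ℕ) by omega, show p - ((n:ℕ) - p) = 2*p - (n:ℕ) by omega]
        at this
      exact this.symm
  rw [bit_def _ n.2, bit_def _ n.2] at this
  simpa using this

lemma PSext_rightinv {p : ℕ} (a : ZMod 2) (g : Fin p → ZMod 2) :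
    bit p (PSext p a g) 0 = a ∧
    ∀ j : Fin p, bit p (PSext p a g) (j:ℕ) + bit p (PSext p a g) ((j:ℕ)+1) = g j := by
  constructor
  · rw [bit_PSext _ _ (by omega)]; simp
  · intro j
    have hj := j.2
    rw [bit_PSext _ _ (by omega), bit_PSext _ _ (by omega),
      show min (j:ℕ) (2*p - (j:ℕ)) = (j:ℕ) by omega,
      show min ((j:ℕ)+1) (2*p - ((j:ℕ)+1)) = (j:ℕ)+1 by omega,
      Finset.sum_range_succ, G, dif_pos hj]
    have key2 : ∀ u v w : ZMod 2, (u + v) + (u + (v + w)) = w := by decide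
    have := key2 a (∑ x ∈ Finset.range (j:ℕ), G g x) (g ⟨(j:ℕ), hj⟩)
    simpa using this

lemma sumB {p : ℕ} (β : Fin p → ℝ) :
    ∑ t ∈ Finset.univ.filter (fun t : BS p => L p t = p), sgn p t * B p β t = 2 := by
  classical
  have step1 : ∑ t ∈ Finset.univ.filter (fun t : BS p => L p t = p), sgn p t * B p β t
      = ∑ x : ZMod 2 × (Fin p → ZMod 2), ∏ j : Fin p, vv β j (x.2 j) := by
    refine Finset.sum_nbij' (i := fun t => (bit p t 0, fun j : Fin p => bit p t (j:ℕ) + bit p t ((j:ℕ)+1)))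
      (j := fun x => PSext p x.1 x.2) ?_ ?_ ?_ ?_ ?_
    · intro t ht; exact Finset.mem_univ _
    · intro x _; exact Finset.mem_filter.2 ⟨Finset.mem_univ _, L_PSext x.1 x.2⟩
    · intro t ht
      exact PSext_leftinv t (Finset.mem_filter.1 ht).2
    · intro x _
      obtain ⟨h1, h2⟩ := PSext_rightinv x.1 x.2
      exact Prod.ext h1 (funext h2)
    · intro t ht
      exact sgnB_eq β t (Finset.mem_filter.1 ht).2
  rw [step1, Fintype.sum_prod_type]
  have inner : ∀ a : ZMod 2, ∑ g : Fin p → ZMod 2, ∏ j : Fin p, vv β j (g j)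
      = ∏ j : Fin p, (vv β j 0 + vv β j 1) := by
    intro a
    rw [← Fintype.piFinset_univ, ← Finset.prod_univ_sum]
    refine Finset.prod_congr rfl (fun j _ => ?_)
    rw [show (Finset.univ : Finset (ZMod 2)) = {0, 1} by decide]
    rw [Finset.sum_insert (by decide), Finset.sum_singleton]
  have e1 : ∀ j : Fin p, vv β j 0 + vv β j 1 = 1 := by
    intro j
    unfold vv
    rw [if_pos rfl, if_neg (by decide)]
    norm_cast
    rw [add_comm]
    exact_mod_cast Real.sin_sq_add_cos_sq (β j / 2)
  calc ∑ a : ZMod 2, ∑ g : Fin p → ZMod 2, ∏ j : Fin p, vv β j (g j)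
      = ∑ a : ZMod 2, ∏ j : Fin p, (vv β j 0 + vv β j 1) :=
        Finset.sum_congr rfl (fun a _ => inner a)
    _ = ∑ a : ZMod 2, 1 := by
        refine Finset.sum_congr rfl (fun a _ => ?_)
        rw [Finset.prod_congr rfl (fun j _ => e1 j), Finset.prod_const_one]
    _ = 2 := by
        rw [Finset.sum_const]
        simp


-- chunk 5
set_option maxHeartbeats 1000000

lemma sum_shift {p : ℕ} (T : Finset (BS p)) (hT : ∀ t ∈ T, t + 1 ∈ T)
    (f w : BS p → ℂ) (hf : ∀ t ∈ T, f (t + 1) = f t) (s : BS p) :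
    ∑ t ∈ T, f t * w (s + 1 + t) = ∑ t ∈ T, f t * w (s + t) := by
  refine Finset.sum_nbij' (i := fun t => t + 1) (j := fun t => t + 1)
    (fun t ht => hT t ht) (fun t ht => hT t ht)
    (fun t _ => add_one_add_one t) (fun t _ => add_one_add_one t) (fun t ht => ?_)
  show f t * w (s + 1 + t) = f (t + 1) * w (s + (t + 1))
  rw [hf t ht, add_right_comm s 1 t, add_assoc]

lemma Tp_closed {p : ℕ} : ∀ t ∈ Finset.univ.filter (fun t : BS p => L p t = p),
    t + 1 ∈ Finset.univ.filter (fun t : BS p => L p t = p) := by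
  intro t ht
  simp only [Finset.mem_filter, Finset.mem_univ, true_and, L_add_one] at *
  exact ht

lemma Ts_closed {p : ℕ} (m : ℕ) :
    ∀ t ∈ Finset.univ.filter (fun t : BS p => m < L p t ∧ L p t < p),
    t + 1 ∈ Finset.univ.filter (fun t : BS p => m < L p t ∧ L p t < p) := by
  intro t ht
  simp only [Finset.mem_filter, Finset.mem_univ, true_and, L_add_one] at *
  exact ht

lemma shift1 {p : ℕ} (β γ : Fin p → ℝ) (s : BS p) :
    ∑ t ∈ Finset.univ.filter (fun t : BS p => L p t = p),
      sgn p t * B p β t * Complex.exp (Complex.I * (phi p γ (s + 1 + t) : ℝ)) =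
    ∑ t ∈ Finset.univ.filter (fun t : BS p => L p t = p),
      sgn p t * B p β t * Complex.exp (Complex.I * (phi p γ (s + t) : ℝ)) :=
  sum_shift _ Tp_closed (fun t => sgn p t * B p β t)
    (fun u => Complex.exp (Complex.I * (phi p γ u : ℝ)))
    (fun t _ => by show sgn p (t+1) * B p β (t+1) = _; rw [sgn_add_one, B_add_one]) s

lemma shift1sq {p : ℕ} (β γ : Fin p → ℝ) (s : BS p) :
    ∑ t ∈ Finset.univ.filter (fun t : BS p => L p t = p),
      sgn p t * B p β t * ((phi p γ (s + 1 + t) : ℝ) : ℂ) ^ 2 =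
    ∑ t ∈ Finset.univ.filter (fun t : BS p => L p t = p),
      sgn p t * B p β t * ((phi p γ (s + t) : ℝ) : ℂ) ^ 2 :=
  sum_shift _ Tp_closed (fun t => sgn p t * B p β t)
    (fun u => ((phi p γ u : ℝ) : ℂ) ^ 2)
    (fun t _ => by show sgn p (t+1) * B p β (t+1) = _; rw [sgn_add_one, B_add_one]) s

lemma shift2 {p : ℕ} (d : ℝ) (β γ : Fin p → ℝ) (s : BS p)
    (hR : ∀ t ∈ Finset.univ.filter (fun t : BS p => L p s < L p t ∧ L p t < p),
      Rrec p d β γ (t + 1) = Rrec p d β γ t) :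
    ∑ t ∈ Finset.univ.filter (fun t : BS p => L p s < L p t ∧ L p t < p),
      sgn p t * B p β t * Rrec p d β γ t * Complex.exp (Complex.I * (phi p γ (s + 1 + t) : ℝ)) =
    ∑ t ∈ Finset.univ.filter (fun t : BS p => L p s < L p t ∧ L p t < p),
      sgn p t * B p β t * Rrec p d β γ t * Complex.exp (Complex.I * (phi p γ (s + t) : ℝ)) :=
  sum_shift _ (Ts_closed (L p s)) (fun t => sgn p t * B p β t * Rrec p d β γ t)
    (fun u => Complex.exp (Complex.I * (phi p γ u : ℝ)))
    (fun t ht => by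
      show sgn p (t+1) * B p β (t+1) * Rrec p d β γ (t+1) = _
      rw [sgn_add_one, B_add_one, hR t ht]) s

lemma shift2sq {p : ℕ} (β γ : Fin p → ℝ) (s : BS p)
    (hR : ∀ t ∈ Finset.univ.filter (fun t : BS p => L p s < L p t ∧ L p t < p),
      Rsk p β γ (t + 1) = Rsk p β γ t) :
    ∑ t ∈ Finset.univ.filter (fun t : BS p => L p s < L p t ∧ L p t < p),
      sgn p t * B p β t * ((phi p γ (s + 1 + t) : ℝ) : ℂ) ^ 2 * Rsk p β γ t =
    ∑ t ∈ Finset.univ.filter (fun t : BS p => L p s < L p t ∧ L p t < p),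
      sgn p t * B p β t * ((phi p γ (s + t) : ℝ) : ℂ) ^ 2 * Rsk p β γ t := by
  have h1 : ∀ w : BS p, sgn p w * B p β w * ((phi p γ (s + 1 + w) : ℝ) : ℂ) ^ 2 * Rsk p β γ w
      = (sgn p w * B p β w * Rsk p β γ w) * ((phi p γ (s + 1 + w) : ℝ) : ℂ) ^ 2 := by
    intro w; ring
  have h2 : ∀ w : BS p, sgn p w * B p β w * ((phi p γ (s + w) : ℝ) : ℂ) ^ 2 * Rsk p β γ w
      = (sgn p w * B p β w * Rsk p β γ w) * ((phi p γ (s + w) : ℝ) : ℂ) ^ 2 := by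
    intro w; ring
  rw [Finset.sum_congr rfl (fun t _ => h1 t), Finset.sum_congr rfl (fun t _ => h2 t)]
  exact sum_shift _ (Ts_closed (L p s)) (fun t => sgn p t * B p β t * Rsk p β γ t)
    (fun u => ((phi p γ u : ℝ) : ℂ) ^ 2)
    (fun t ht => by
      show sgn p (t+1) * B p β (t+1) * Rsk p β γ (t+1) = _
      rw [sgn_add_one, B_add_one, hR t ht]) s

lemma Rrec_add_one {p : ℕ} (d : ℝ) (β γ : Fin p → ℝ) :
    ∀ (n : ℕ) (s : BS p), p ≤ L p s + n → Rrec p d β γ (s + 1) = Rrec p d β γ s := by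
  intro n
  induction n with
  | zero =>
    intro s hs
    have hLs : L p s = p := le_antisymm (L_le s) (by omega)
    rw [Rrec, Rrec, L_add_one, shift1, if_neg (show ¬(L p s + 2 ≤ p) by omega),
      if_neg (show ¬(L p s + 2 ≤ p) by omega)]
  | succ n ih =>
    intro s hs
    rw [Rrec, Rrec, L_add_one, shift1]
    by_cases hif : L p s + 2 ≤ p
    · rw [if_pos hif, if_pos hif]
      have key : ∑ t ∈ (Finset.univ.filter (fun t : BS p => L p s < L p t ∧ L p t < p)).attach,
            sgn p t.1 * B p β t.1 * Rrec p d β γ t.1 *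
              Complex.exp (Complex.I * (phi p γ (s + 1 + t.1) : ℝ)) =
          ∑ t ∈ (Finset.univ.filter (fun t : BS p => L p s < L p t ∧ L p t < p)).attach,
            sgn p t.1 * B p β t.1 * Rrec p d β γ t.1 *
              Complex.exp (Complex.I * (phi p γ (s + t.1) : ℝ)) := by
        rw [Finset.sum_attach _ (fun t => sgn p t * B p β t * Rrec p d β γ t *
            Complex.exp (Complex.I * (phi p γ (s + 1 + t) : ℝ))),
          Finset.sum_attach _ (fun t => sgn p t * B p β t * Rrec p d β γ t *
            Complex.exp (Complex.I * (phi p γ (s + t) : ℝ)))]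
        refine shift2 d β γ s (fun t ht => ?_)
        have hm := (Finset.mem_filter.1 ht).2
        exact ih t (by omega)
      rw [key]
    · rw [if_neg hif, if_neg hif]

lemma Rsk_add_one {p : ℕ} (β γ : Fin p → ℝ) :
    ∀ (n : ℕ) (s : BS p), p ≤ L p s + n → Rsk p β γ (s + 1) = Rsk p β γ s := by
  intro n
  induction n with
  | zero =>
    intro s hs
    have hLs : L p s = p := le_antisymm (L_le s) (by omega)
    rw [Rsk, Rsk, L_add_one, shift1sq, if_neg (show ¬(L p s + 2 ≤ p) by omega),
      if_neg (show ¬(L p s + 2 ≤ p) by omega)]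
  | succ n ih =>
    intro s hs
    rw [Rsk, Rsk, L_add_one, shift1sq]
    by_cases hif : L p s + 2 ≤ p
    · rw [if_pos hif, if_pos hif]
      have key : ∑ t ∈ (Finset.univ.filter (fun t : BS p => L p s < L p t ∧ L p t < p)).attach,
            sgn p t.1 * B p β t.1 * ((phi p γ (s + 1 + t.1) : ℝ) : ℂ) ^ 2 * Rsk p β γ t.1 =
          ∑ t ∈ (Finset.univ.filter (fun t : BS p => L p s < L p t ∧ L p t < p)).attach,
            sgn p t.1 * B p β t.1 * ((phi p γ (s + t.1) : ℝ) : ℂ) ^ 2 * Rsk p β γ t.1 := by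
        rw [Finset.sum_attach _ (fun t => sgn p t * B p β t * ((phi p γ (s + 1 + t) : ℝ) : ℂ) ^ 2 *
            Rsk p β γ t),
          Finset.sum_attach _ (fun t => sgn p t * B p β t * ((phi p γ (s + t) : ℝ) : ℂ) ^ 2 *
            Rsk p β γ t)]
        refine shift2sq β γ s (fun t ht => ?_)
        have hm := (Finset.mem_filter.1 ht).2
        exact ih t (by omega)
      rw [key]
    · rw [if_neg hif, if_neg hif]

lemma Rrec_pflip {p : ℕ} (d : ℝ) (β γ : Fin p → ℝ) (s : BS p) (hsp : L p s < p) :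
    Rrec p d β γ (pflip p s) = Rrec p d β γ s := by
  rw [Rrec, Rrec, L_pflip]
  have k1 : ∑ t ∈ Finset.univ.filter (fun t : BS p => L p t = p),
        sgn p t * B p β t * Complex.exp (Complex.I * (phi p γ (pflip p s + t) : ℝ)) =
      ∑ t ∈ Finset.univ.filter (fun t : BS p => L p t = p),
        sgn p t * B p β t * Complex.exp (Complex.I * (phi p γ (s + t) : ℝ)) := by
    refine Finset.sum_congr rfl (fun t ht => ?_)
    have hm := (Finset.mem_filter.1 ht).2
    rw [phi_pflip γ s t (by omega)]
  have k2 : ∑ t ∈ (Finset.univ.filter (fun t : BS p => L p s < L p t ∧ L p t < p)).attach,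
        sgn p t.1 * B p β t.1 * Rrec p d β γ t.1 *
          Complex.exp (Complex.I * (phi p γ (pflip p s + t.1) : ℝ)) =
      ∑ t ∈ (Finset.univ.filter (fun t : BS p => L p s < L p t ∧ L p t < p)).attach,
        sgn p t.1 * B p β t.1 * Rrec p d β γ t.1 *
          Complex.exp (Complex.I * (phi p γ (s + t.1) : ℝ)) := by
    refine Finset.sum_congr rfl (fun t _ => ?_)
    have hm := (Finset.mem_filter.1 t.2).2
    rw [phi_pflip γ s t.1 (by omega)]
  rw [k1, k2]

lemma Rsk_pflip {p : ℕ} (β γ : Fin p → ℝ) (s : BS p) (hsp : L p s < p) :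
    Rsk p β γ (pflip p s) = Rsk p β γ s := by
  rw [Rsk, Rsk, L_pflip]
  have k1 : ∑ t ∈ Finset.univ.filter (fun t : BS p => L p t = p),
        sgn p t * B p β t * ((phi p γ (pflip p s + t) : ℝ) : ℂ) ^ 2 =
      ∑ t ∈ Finset.univ.filter (fun t : BS p => L p t = p),
        sgn p t * B p β t * ((phi p γ (s + t) : ℝ) : ℂ) ^ 2 := by
    refine Finset.sum_congr rfl (fun t ht => ?_)
    have hm := (Finset.mem_filter.1 ht).2
    rw [phi_pflip γ s t (by omega)]
  have k2 : ∑ t ∈ (Finset.univ.filter (fun t : BS p => L p s < L p t ∧ L p t < p)).attach,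
        sgn p t.1 * B p β t.1 * ((phi p γ (pflip p s + t.1) : ℝ) : ℂ) ^ 2 * Rsk p β γ t.1 =
      ∑ t ∈ (Finset.univ.filter (fun t : BS p => L p s < L p t ∧ L p t < p)).attach,
        sgn p t.1 * B p β t.1 * ((phi p γ (s + t.1) : ℝ) : ℂ) ^ 2 * Rsk p β γ t.1 := by
    refine Finset.sum_congr rfl (fun t _ => ?_)
    have hm := (Finset.mem_filter.1 t.2).2
    rw [phi_pflip γ s t.1 (by omega)]
  rw [k1, k2]


-- chunk 6
set_option maxHeartbeats 1000000

lemma abs_sgn {p : ℕ} (t : BS p) : ‖sgn p t‖ = 1 := by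
  unfold sgn; split <;> simp

lemma cos_taylor (x : ℝ) : |Real.cos x - (1 - x^2/2)| ≤ 3 * x^4 := by
  rcases le_or_gt |x| 1 with h | h
  · refine le_trans (Real.cos_bound h) ?_
    have h1 : |x|^4 = x^4 := by
      rw [← _root_.abs_pow]; exact abs_of_nonneg (by positivity)
    nlinarith [pow_nonneg (abs_nonneg x) 4]
  · have h1 : 1 ≤ x^2 := by nlinarith [_root_.sq_abs x, abs_nonneg x]
    have h2 : x^2 ≤ x^4 := by nlinarith
    have h3 := Real.neg_one_le_cos x
    have h4 := Real.cos_le_one x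
    rw [abs_le]
    constructor <;> nlinarith

lemma sum_cos {p : ℕ} (T : Finset (BS p)) (hT : ∀ t ∈ T, t + 1 ∈ T)
    (F : BS p → ℂ) (hF : ∀ t ∈ T, F (t + 1) = F t)
    (θ : BS p → ℝ) (hθ : ∀ t ∈ T, θ (t + 1) = - θ t) :
    ∑ t ∈ T, F t * Complex.exp (Complex.I * ((θ t : ℝ) : ℂ)) =
    ∑ t ∈ T, F t * ((Real.cos (θ t) : ℝ) : ℂ) := by
  have flip : ∑ t ∈ T, F t * Complex.exp (Complex.I * ((θ t : ℝ) : ℂ)) =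
      ∑ t ∈ T, F t * Complex.exp (-(Complex.I * ((θ t : ℝ) : ℂ))) := by
    refine Finset.sum_nbij' (i := fun t => t + 1) (j := fun t => t + 1)
      (fun t ht => hT t ht) (fun t ht => hT t ht)
      (fun t _ => add_one_add_one t) (fun t _ => add_one_add_one t) (fun t ht => ?_)
    show F t * Complex.exp (Complex.I * ((θ t : ℝ) : ℂ)) =
      F (t + 1) * Complex.exp (-(Complex.I * ((θ (t + 1) : ℝ) : ℂ)))
    rw [hF t ht, hθ t ht]
    push_cast
    ring_nf
  have key : ∀ x : ℝ, Complex.exp (Complex.I * (x : ℂ)) + Complex.exp (-(Complex.I * (x : ℂ)))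
      = 2 * ((Real.cos x : ℝ) : ℂ) := by
    intro x
    rw [show Complex.I * (x:ℂ) = (x:ℂ) * Complex.I by ring,
      show -((x:ℂ) * Complex.I) = ((-x : ℝ) : ℂ) * Complex.I by push_cast; ring,
      Complex.exp_mul_I, Complex.exp_mul_I, Complex.ofReal_cos, Complex.ofReal_neg,
      Complex.cos_neg, Complex.sin_neg]
    ring
  have h2 : (2:ℂ) * ∑ t ∈ T, F t * Complex.exp (Complex.I * ((θ t : ℝ) : ℂ))
      = (2:ℂ) * ∑ t ∈ T, F t * ((Real.cos (θ t) : ℝ) : ℂ) := by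
    calc (2:ℂ) * ∑ t ∈ T, F t * Complex.exp (Complex.I * ((θ t : ℝ) : ℂ))
        = ∑ t ∈ T, F t * Complex.exp (Complex.I * ((θ t : ℝ) : ℂ))
          + ∑ t ∈ T, F t * Complex.exp (-(Complex.I * ((θ t : ℝ) : ℂ))) := by
          rw [← flip]; ring
      _ = ∑ t ∈ T, (F t * Complex.exp (Complex.I * ((θ t : ℝ) : ℂ))
          + F t * Complex.exp (-(Complex.I * ((θ t : ℝ) : ℂ)))) := Finset.sum_add_distrib.symm
      _ = ∑ t ∈ T, F t * (2 * ((Real.cos (θ t) : ℝ) : ℂ)) := by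
          refine Finset.sum_congr rfl (fun t _ => ?_)
          rw [← key (θ t)]; ring
      _ = (2:ℂ) * ∑ t ∈ T, F t * ((Real.cos (θ t) : ℝ) : ℂ) := by
          rw [Finset.mul_sum]
          exact Finset.sum_congr rfl (fun t _ => by ring)
  exact mul_left_cancel₀ two_ne_zero h2

lemma sum_pflip_zero {p : ℕ} (β : Fin p → ℝ) (T : Finset (BS p))
    (hcl : ∀ t ∈ T, pflip p t ∈ T) (hlt : ∀ t ∈ T, L p t < p)
    (F : BS p → ℂ) (hF : ∀ t ∈ T, F (pflip p t) = F t) :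
    ∑ t ∈ T, sgn p t * B p β t * F t = 0 := by
  refine Finset.sum_involution (fun t _ => pflip p t) (fun t ht => ?_)
    (fun t _ _ => pflip_ne t) (fun t ht => hcl t ht) (fun t _ => pflip_pflip t)
  rw [sgn_pflip t (hlt t ht), B_pflip β t (hlt t ht), hF t ht]
  ring

lemma exp_est (Xt : ℂ) (C0 : ℝ) (hC0 : 0 < C0) :
    ∃ C, 0 < C ∧ ∀ (Xd : ℂ) (d : ℝ), 2 ≤ d → ‖Xd - Xt‖ ≤ C0/d →
      ‖Complex.exp Xd - Complex.exp Xt‖ ≤ C / d := by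
  set A := ‖Complex.exp Xt‖ with hA
  set E := Real.exp (C0/2) with hE
  have hA0 : 0 < A := norm_pos_iff.2 (Complex.exp_ne_zero _)
  have hE0 : 0 < E := Real.exp_pos _
  refine ⟨A * C0 * (3 + E) + 1, by positivity, fun Xd d hd hΔ => ?_⟩
  have hd0 : (0:ℝ) < d := by linarith
  have hfac : Complex.exp Xd - Complex.exp Xt
      = Complex.exp Xt * (Complex.exp (Xd - Xt) - 1) := by
    rw [mul_sub, mul_one, ← Complex.exp_add]
    ring_nf
  rw [hfac, norm_mul, ← hA]
  rcases le_or_gt (‖Xd - Xt‖) 1 with h1 | h1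
  · have h2 := Complex.norm_exp_sub_one_le h1
    have h3 : ‖Complex.exp (Xd - Xt) - 1‖ ≤ 2 * (C0/d) := by
      refine le_trans h2 ?_
      linarith
    calc A * ‖Complex.exp (Xd - Xt) - 1‖ ≤ A * (2 * (C0/d)) :=
          mul_le_mul_of_nonneg_left h3 hA0.le
      _ = (2 * A * C0) / d := by ring
      _ ≤ (A * C0 * (3 + E) + 1) / d := by
          rw [div_le_div_iff₀ hd0 hd0]
          nlinarith [mul_pos hA0 hC0, hE0, hd0,
            mul_nonneg (mul_nonneg (mul_pos hA0 hC0).le hE0.le) hd0.le,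
            mul_nonneg (mul_pos hA0 hC0).le hd0.le]
  · have hΔ1 : 1 < C0/d := lt_of_lt_of_le h1 hΔ
    have hdC : d < C0 := by
      rw [lt_div_iff₀ hd0] at hΔ1; linarith
    have h4 : ‖Complex.exp (Xd - Xt)‖ ≤ E := by
      rw [Complex.norm_exp]
      refine Real.exp_le_exp.2 ?_
      calc (Xd - Xt).re ≤ ‖Xd - Xt‖ := Complex.re_le_norm _
        _ ≤ C0/d := hΔ
        _ ≤ C0/2 := by
            rw [div_le_div_iff₀ hd0 (by norm_num : (0:ℝ) < 2)]
            nlinarith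
    have h5 : ‖Complex.exp (Xd - Xt) - 1‖ ≤ E + 1 := by
      have h6 := norm_sub_le_norm_sub_add_norm_sub (Complex.exp (Xd - Xt)) 0 1
      simp only [sub_zero, zero_sub] at h6
      have h7 : ‖(-1 : ℂ)‖ = 1 := by simp
      rw [h7] at h6
      linarith
    calc A * ‖Complex.exp (Xd - Xt) - 1‖ ≤ A * (E + 1) :=
          mul_le_mul_of_nonneg_left h5 hA0.le
      _ ≤ (A * C0 * (3 + E) + 1) / d := by
          rw [le_div_iff₀ hd0]
          nlinarith [mul_pos hA0 hE0]

lemma Xbound {p : ℕ} (β γ : Fin p → ℝ) (s : BS p) :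
    ∃ C, 0 < C ∧ ∀ d : ℝ, 2 ≤ d →
      ‖(-(d : ℂ) * (1 - (1/2 : ℂ) *
          ∑ t ∈ Finset.univ.filter (fun t : BS p => L p t = p),
            sgn p t * B p β t *
              Complex.exp (Complex.I * (phi p (fun j => γ j / Real.sqrt d) (s + t) : ℝ)))) -
        (-(1/4 : ℂ) * ∑ t ∈ Finset.univ.filter (fun t : BS p => L p t = p),
            sgn p t * B p β t * ((phi p γ (s + t) : ℝ) : ℂ) ^ 2)‖ ≤ C / d := by
  have hS0 : (0:ℝ) ≤ ∑ t ∈ Finset.univ.filter (fun t : BS p => L p t = p),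
      ‖B p β t‖ * (phi p γ (s + t))^4 :=
    Finset.sum_nonneg (fun t _ => by positivity)
  refine ⟨3/2 * (∑ t ∈ Finset.univ.filter (fun t : BS p => L p t = p),
      ‖B p β t‖ * (phi p γ (s + t))^4) + 1, by linarith, fun d hd => ?_⟩
  have hd0 : (0:ℝ) < d := by linarith
  have hsd2 : Real.sqrt d ^ 2 = d := Real.sq_sqrt hd0.le
  simp only [phi_div]
  have hcos : (∑ t ∈ Finset.univ.filter (fun t : BS p => L p t = p),
        sgn p t * B p β t *
          Complex.exp (Complex.I * ((phi p γ (s + t) / Real.sqrt d : ℝ) : ℂ))) =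
      ∑ t ∈ Finset.univ.filter (fun t : BS p => L p t = p),
        sgn p t * B p β t * ((Real.cos (phi p γ (s + t) / Real.sqrt d) : ℝ) : ℂ) :=
    sum_cos _ Tp_closed (fun t => sgn p t * B p β t)
      (fun t _ => by show sgn p (t+1) * B p β (t+1) = _; rw [sgn_add_one, B_add_one])
      (fun t => phi p γ (s + t) / Real.sqrt d)
      (fun t _ => by
        show phi p γ (s + (t + 1)) / Real.sqrt d = -(phi p γ (s + t) / Real.sqrt d)
        rw [phi_add_comm, neg_div])
  rw [hcos]
  set S := ∑ t ∈ Finset.univ.filter (fun t : BS p => L p t = p),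
      sgn p t * B p β t * ((Real.cos (phi p γ (s + t) / Real.sqrt d) : ℝ) : ℂ) with hSdef
  set Q := ∑ t ∈ Finset.univ.filter (fun t : BS p => L p t = p),
      sgn p t * B p β t * ((phi p γ (s + t) : ℝ) : ℂ) ^ 2 with hQdef
  have hdc : (d:ℂ) ≠ 0 := by exact_mod_cast hd0.ne'
  have hkey : (-(d:ℂ) * (1 - (1/2:ℂ) * S)) - (-(1/4:ℂ) * Q)
      = ((d:ℂ)/2) * (S - 2 + Q/(2*(d:ℂ))) := by
    field_simp
    ring
  have hexp : S - 2 + Q/(2*(d:ℂ)) =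
      ∑ t ∈ Finset.univ.filter (fun t : BS p => L p t = p),
        sgn p t * B p β t * (((Real.cos (phi p γ (s + t) / Real.sqrt d) : ℝ) : ℂ) - 1
          + ((phi p γ (s + t) : ℝ) : ℂ)^2 / (2*(d:ℂ))) := by
    have hdiv : ∑ t ∈ Finset.univ.filter (fun t : BS p => L p t = p),
        sgn p t * B p β t * (((phi p γ (s + t) : ℝ) : ℂ)^2 / (2*(d:ℂ))) = Q/(2*(d:ℂ)) := by
      rw [hQdef, Finset.sum_div]
      exact Finset.sum_congr rfl (fun t _ => (mul_div_assoc _ _ _).symm)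
    simp only [mul_sub, mul_add, Finset.sum_sub_distrib, Finset.sum_add_distrib, mul_one]
    rw [hdiv, ← hSdef, sumB]
  rw [hkey, hexp, norm_mul]
  have h1 : ‖(d:ℂ)/2‖ = d/2 := by
    rw [norm_div, Complex.norm_real, Real.norm_eq_abs, _root_.abs_of_pos hd0]
    simp
  rw [h1]
  have hterm : ∀ t ∈ Finset.univ.filter (fun t : BS p => L p t = p),
      ‖sgn p t * B p β t * (((Real.cos (phi p γ (s + t) / Real.sqrt d) : ℝ) : ℂ) - 1
          + ((phi p γ (s + t) : ℝ) : ℂ)^2 / (2*(d:ℂ)))‖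
      ≤ ‖B p β t‖ * (3 * (phi p γ (s + t))^4 / d^2) := by
    intro t _
    rw [norm_mul, norm_mul, abs_sgn, one_mul]
    refine mul_le_mul_of_nonneg_left ?_ (norm_nonneg _)
    set φt := phi p γ (s + t) with hφt
    have hre : (((Real.cos (φt / Real.sqrt d) : ℝ) : ℂ) - 1 + ((φt : ℝ) : ℂ)^2 / (2*(d:ℂ)))
        = ((Real.cos (φt / Real.sqrt d) - 1 + φt^2/(2*d) : ℝ) : ℂ) := by
      push_cast
      ring
    rw [hre, Complex.norm_real, Real.norm_eq_abs]
    have hu2 : (φt / Real.sqrt d)^2 = φt^2 / d := by rw [div_pow, hsd2]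
    have hu4 : (φt / Real.sqrt d)^4 = φt^4 / d^2 := by
      rw [div_pow, show (Real.sqrt d)^4 = ((Real.sqrt d)^2)^2 by ring, hsd2]
    have heq : Real.cos (φt / Real.sqrt d) - 1 + φt^2/(2*d)
        = Real.cos (φt / Real.sqrt d) - (1 - (φt / Real.sqrt d)^2/2) := by
      rw [hu2]
      ring
    rw [heq]
    have := cos_taylor (φt / Real.sqrt d)
    rw [hu4] at this
    calc |Real.cos (φt / Real.sqrt d) - (1 - (φt / Real.sqrt d)^2/2)|
        ≤ 3 * (φt^4/d^2) := this
      _ = 3 * φt^4 / d^2 := by ring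
  have habs : ‖∑ t ∈ Finset.univ.filter (fun t : BS p => L p t = p),
      sgn p t * B p β t * (((Real.cos (phi p γ (s + t) / Real.sqrt d) : ℝ) : ℂ) - 1
        + ((phi p γ (s + t) : ℝ) : ℂ)^2 / (2*(d:ℂ)))‖
      ≤ ∑ t ∈ Finset.univ.filter (fun t : BS p => L p t = p),
        ‖B p β t‖ * (3 * (phi p γ (s + t))^4 / d^2) :=
    le_trans (norm_sum_le _ _) (Finset.sum_le_sum hterm)
  calc d/2 * ‖∑ t ∈ Finset.univ.filter (fun t : BS p => L p t = p),
        sgn p t * B p β t * (((Real.cos (phi p γ (s + t) / Real.sqrt d) : ℝ) : ℂ) - 1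
          + ((phi p γ (s + t) : ℝ) : ℂ)^2 / (2*(d:ℂ)))‖
      ≤ d/2 * ∑ t ∈ Finset.univ.filter (fun t : BS p => L p t = p),
        ‖B p β t‖ * (3 * (phi p γ (s + t))^4 / d^2) :=
        mul_le_mul_of_nonneg_left habs (by positivity)
    _ = (3/2 * (∑ t ∈ Finset.univ.filter (fun t : BS p => L p t = p),
        ‖B p β t‖ * (phi p γ (s + t))^4)) / d := by
        have hsum2 : ∑ t ∈ Finset.univ.filter (fun t : BS p => L p t = p),
            ‖B p β t‖ * (3 * (phi p γ (s + t))^4 / d^2)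
            = 3/d^2 * ∑ t ∈ Finset.univ.filter (fun t : BS p => L p t = p),
              ‖B p β t‖ * (phi p γ (s + t))^4 := by
          rw [Finset.mul_sum]
          exact Finset.sum_congr rfl (fun t _ => by ring)
        rw [hsum2]
        field_simp
    _ ≤ (3/2 * (∑ t ∈ Finset.univ.filter (fun t : BS p => L p t = p),
        ‖B p β t‖ * (phi p γ (s + t))^4) + 1) / d := by
        rw [div_le_div_iff₀ hd0 hd0]
        nlinarith

lemma Tpf_closed {p : ℕ} (m : ℕ) :
    ∀ t ∈ Finset.univ.filter (fun t : BS p => m < L p t ∧ L p t < p),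
    pflip p t ∈ Finset.univ.filter (fun t : BS p => m < L p t ∧ L p t < p) := by
  intro t ht
  simp only [Finset.mem_filter, Finset.mem_univ, true_and, L_pflip] at *
  exact ht

lemma Ybound {p : ℕ} (β γ : Fin p → ℝ) (s : BS p) (Cf : BS p → ℝ)
    (hCf0 : ∀ t, 0 < Cf t)
    (hCf : ∀ t ∈ Finset.univ.filter (fun t : BS p => L p s < L p t ∧ L p t < p), ∀ d : ℝ,
      2 ≤ d → ‖Rrec p d β (fun j => γ j / Real.sqrt d) t - Rsk p β γ t‖ ≤ Cf t / d) :
    ∃ C, 0 < C ∧ ∀ d : ℝ, 2 ≤ d →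
      ‖(((d:ℂ)/2) *
          ∑ t ∈ (Finset.univ.filter (fun t : BS p => L p s < L p t ∧ L p t < p)).attach,
            sgn p t.1 * B p β t.1 * Rrec p d β (fun j => γ j / Real.sqrt d) t.1 *
              Complex.exp (Complex.I * (phi p (fun j => γ j / Real.sqrt d) (s + t.1) : ℝ))) -
        (-(1/4 : ℂ) *
          ∑ t ∈ (Finset.univ.filter (fun t : BS p => L p s < L p t ∧ L p t < p)).attach,
            sgn p t.1 * B p β t.1 * ((phi p γ (s + t.1) : ℝ) : ℂ) ^ 2 * Rsk p β γ t.1)‖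
        ≤ C / d := by
  set T := Finset.univ.filter (fun t : BS p => L p s < L p t ∧ L p t < p) with hT
  have hS1 : (0:ℝ) ≤ ∑ t ∈ T, ‖B p β t‖ *
      ((‖Rsk p β γ t‖ + Cf t) * (phi p γ (s + t))^4) :=
    Finset.sum_nonneg (fun t _ => by
      have := hCf0 t
      have := norm_nonneg (Rsk p β γ t)
      positivity)
  have hS2 : (0:ℝ) ≤ ∑ t ∈ T, ‖B p β t‖ * (Cf t * (phi p γ (s + t))^2) :=
    Finset.sum_nonneg (fun t _ => by have := hCf0 t; positivity)
  refine ⟨3/2 * (∑ t ∈ T, ‖B p β t‖ *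
      ((‖Rsk p β γ t‖ + Cf t) * (phi p γ (s + t))^4))
      + 1/4 * (∑ t ∈ T, ‖B p β t‖ * (Cf t * (phi p γ (s + t))^2)) + 1,
    by linarith, fun d hd => ?_⟩
  have hd0 : (0:ℝ) < d := by linarith
  have hdc : (d:ℂ) ≠ 0 := by exact_mod_cast hd0.ne'
  have hsd2 : Real.sqrt d ^ 2 = d := Real.sq_sqrt hd0.le
  rw [Finset.sum_attach T (fun t => sgn p t * B p β t *
      Rrec p d β (fun j => γ j / Real.sqrt d) t *
      Complex.exp (Complex.I * ((phi p (fun j => γ j / Real.sqrt d) (s + t) : ℝ) : ℂ))),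
    Finset.sum_attach T (fun t => sgn p t * B p β t * ((phi p γ (s + t) : ℝ) : ℂ) ^ 2 *
      Rsk p β γ t)]
  simp only [phi_div]
  have hcos : (∑ t ∈ T, sgn p t * B p β t * Rrec p d β (fun j => γ j / Real.sqrt d) t *
        Complex.exp (Complex.I * ((phi p γ (s + t) / Real.sqrt d : ℝ) : ℂ))) =
      ∑ t ∈ T, sgn p t * B p β t * Rrec p d β (fun j => γ j / Real.sqrt d) t *
        ((Real.cos (phi p γ (s + t) / Real.sqrt d) : ℝ) : ℂ) :=
    sum_cos T (Ts_closed _)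
      (fun t => sgn p t * B p β t * Rrec p d β (fun j => γ j / Real.sqrt d) t)
      (fun t _ => by
        show sgn p (t+1) * B p β (t+1) * Rrec p d β (fun j => γ j / Real.sqrt d) (t+1) = _
        rw [sgn_add_one, B_add_one,
          Rrec_add_one d β (fun j => γ j / Real.sqrt d) p t (Nat.le_add_left p (L p t))])
      (fun t => phi p γ (s + t) / Real.sqrt d)
      (fun t _ => by
        show phi p γ (s + (t + 1)) / Real.sqrt d = -(phi p γ (s + t) / Real.sqrt d)
        rw [phi_add_comm, neg_div])
  rw [hcos]
  have hzero : ∑ t ∈ T, sgn p t * B p β t * Rrec p d β (fun j => γ j / Real.sqrt d) t = 0 :=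
    sum_pflip_zero β T (Tpf_closed _) (fun t ht => (Finset.mem_filter.1 ht).2.2)
      _ (fun t ht => Rrec_pflip d β _ t (Finset.mem_filter.1 ht).2.2)
  have hsplit : ∑ t ∈ T, sgn p t * B p β t * Rrec p d β (fun j => γ j / Real.sqrt d) t *
        (((Real.cos (phi p γ (s + t) / Real.sqrt d) : ℝ) : ℂ) - 1
          + ((phi p γ (s + t) : ℝ) : ℂ)^2 / (2*(d:ℂ)))
      = (∑ t ∈ T, sgn p t * B p β t * Rrec p d β (fun j => γ j / Real.sqrt d) t *
          ((Real.cos (phi p γ (s + t) / Real.sqrt d) : ℝ) : ℂ))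
        - (∑ t ∈ T, sgn p t * B p β t * Rrec p d β (fun j => γ j / Real.sqrt d) t)
        + (∑ t ∈ T, sgn p t * B p β t * Rrec p d β (fun j => γ j / Real.sqrt d) t *
            ((phi p γ (s + t) : ℝ) : ℂ)^2) / (2*(d:ℂ)) := by
    simp only [mul_sub, mul_add, Finset.sum_sub_distrib, Finset.sum_add_distrib, mul_one]
    congr 1
    rw [Finset.sum_div]
    exact Finset.sum_congr rfl (fun t _ => (mul_div_assoc _ _ _).symm)
  have hmain : ((d:ℂ)/2) * (∑ t ∈ T, sgn p t * B p β t *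
          Rrec p d β (fun j => γ j / Real.sqrt d) t *
          ((Real.cos (phi p γ (s + t) / Real.sqrt d) : ℝ) : ℂ))
        - (-(1/4 : ℂ) * ∑ t ∈ T, sgn p t * B p β t * ((phi p γ (s + t) : ℝ) : ℂ) ^ 2 *
            Rsk p β γ t)
      = ((d:ℂ)/2) * (∑ t ∈ T, sgn p t * B p β t *
          Rrec p d β (fun j => γ j / Real.sqrt d) t *
          (((Real.cos (phi p γ (s + t) / Real.sqrt d) : ℝ) : ℂ) - 1
            + ((phi p γ (s + t) : ℝ) : ℂ)^2 / (2*(d:ℂ))))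
        - (1/4 : ℂ) * (∑ t ∈ T, (sgn p t * B p β t *
            Rrec p d β (fun j => γ j / Real.sqrt d) t * ((phi p γ (s + t) : ℝ) : ℂ)^2
          - sgn p t * B p β t * ((phi p γ (s + t) : ℝ) : ℂ)^2 * Rsk p β γ t)) := by
    rw [hsplit, hzero, Finset.sum_sub_distrib]
    field_simp
    ring
  rw [hmain]
  have habs_sub : ∀ a b : ℂ, ‖a - b‖ ≤ ‖a‖ + ‖b‖ := by
    intro a b
    have h6 := norm_sub_le_norm_sub_add_norm_sub a 0 b
    simpa using h6
  refine le_trans (habs_sub _ _) ?_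
  -- bound each piece
  have habsR : ∀ t ∈ T, ‖Rrec p d β (fun j => γ j / Real.sqrt d) t‖
      ≤ ‖Rsk p β γ t‖ + Cf t := by
    intro t ht
    have h1 := hCf t ht d hd
    have h2 : ‖Rrec p d β (fun j => γ j / Real.sqrt d) t‖
        ≤ ‖Rsk p β γ t‖
          + ‖Rrec p d β (fun j => γ j / Real.sqrt d) t - Rsk p β γ t‖ := by
      have h3 := norm_add_le (Rsk p β γ t)
        (Rrec p d β (fun j => γ j / Real.sqrt d) t - Rsk p β γ t)
      have h4 : Rsk p β γ t + (Rrec p d β (fun j => γ j / Real.sqrt d) t - Rsk p β γ t)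
          = Rrec p d β (fun j => γ j / Real.sqrt d) t := by ring
      rw [h4] at h3
      exact h3
    have h5 : Cf t / d ≤ Cf t := div_le_self (hCf0 t).le (by linarith)
    linarith
  have hterm1 : ∀ t ∈ T, ‖sgn p t * B p β t *
        Rrec p d β (fun j => γ j / Real.sqrt d) t *
        (((Real.cos (phi p γ (s + t) / Real.sqrt d) : ℝ) : ℂ) - 1
          + ((phi p γ (s + t) : ℝ) : ℂ)^2 / (2*(d:ℂ)))‖
      ≤ ‖B p β t‖ * ((‖Rsk p β γ t‖ + Cf t)
          * (3 * (phi p γ (s + t))^4 / d^2)) := by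
    intro t ht
    rw [norm_mul, norm_mul, norm_mul, abs_sgn, one_mul]
    set φt := phi p γ (s + t) with hφt
    have hre : (((Real.cos (φt / Real.sqrt d) : ℝ) : ℂ) - 1 + ((φt : ℝ) : ℂ)^2 / (2*(d:ℂ)))
        = ((Real.cos (φt / Real.sqrt d) - 1 + φt^2/(2*d) : ℝ) : ℂ) := by
      push_cast; ring
    rw [hre, Complex.norm_real, Real.norm_eq_abs]
    have hu2 : (φt / Real.sqrt d)^2 = φt^2 / d := by rw [div_pow, hsd2]
    have hu4 : (φt / Real.sqrt d)^4 = φt^4 / d^2 := by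
      rw [div_pow, show (Real.sqrt d)^4 = ((Real.sqrt d)^2)^2 by ring, hsd2]
    have heq : Real.cos (φt / Real.sqrt d) - 1 + φt^2/(2*d)
        = Real.cos (φt / Real.sqrt d) - (1 - (φt / Real.sqrt d)^2/2) := by
      rw [hu2]; ring
    rw [heq]
    have hct := cos_taylor (φt / Real.sqrt d)
    rw [hu4] at hct
    have hinner : |Real.cos (φt / Real.sqrt d) - (1 - (φt / Real.sqrt d)^2/2)|
        ≤ 3 * φt^4 / d^2 := by
      calc |Real.cos (φt / Real.sqrt d) - (1 - (φt / Real.sqrt d)^2/2)|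
          ≤ 3 * (φt^4/d^2) := hct
        _ = 3 * φt^4 / d^2 := by ring
    calc ‖B p β t‖ * ‖Rrec p d β (fun j => γ j / Real.sqrt d) t‖
          * |Real.cos (φt / Real.sqrt d) - (1 - (φt / Real.sqrt d)^2/2)|
        ≤ ‖B p β t‖ * (‖Rsk p β γ t‖ + Cf t)
          * (3 * φt^4 / d^2) := by
          have hb := norm_nonneg (B p β t)
          have hr0 := norm_nonneg
            (Rrec p d β (fun j => γ j / Real.sqrt d) t)
          have h8 := habsR t ht
          have h9 := abs_nonneg (Real.cos (φt / Real.sqrt d) - (1 - (φt / Real.sqrt d)^2/2))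
          have h10 : (0:ℝ) ≤ 3 * φt^4 / d^2 := by positivity
          nlinarith [mul_le_mul h8 hinner h9 (by linarith [hCf0 t] :
            (0:ℝ) ≤ ‖Rsk p β γ t‖ + Cf t)]
      _ = ‖B p β t‖ * ((‖Rsk p β γ t‖ + Cf t)
          * (3 * φt^4 / d^2)) := by ring
  have hterm2 : ∀ t ∈ T, ‖sgn p t * B p β t *
        Rrec p d β (fun j => γ j / Real.sqrt d) t * ((phi p γ (s + t) : ℝ) : ℂ)^2
      - sgn p t * B p β t * ((phi p γ (s + t) : ℝ) : ℂ)^2 * Rsk p β γ t‖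
      ≤ ‖B p β t‖ * ((Cf t * (phi p γ (s + t))^2) / d) := by
    intro t ht
    have he : sgn p t * B p β t * Rrec p d β (fun j => γ j / Real.sqrt d) t *
          ((phi p γ (s + t) : ℝ) : ℂ)^2
        - sgn p t * B p β t * ((phi p γ (s + t) : ℝ) : ℂ)^2 * Rsk p β γ t
        = sgn p t * B p β t * ((phi p γ (s + t) : ℝ) : ℂ)^2 *
          (Rrec p d β (fun j => γ j / Real.sqrt d) t - Rsk p β γ t) := by ring
    rw [he, norm_mul, norm_mul, norm_mul, abs_sgn, one_mul]
    have h11 : ‖((phi p γ (s + t) : ℝ) : ℂ)^2‖ = (phi p γ (s + t))^2 := by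
      rw [norm_pow, Complex.norm_real, Real.norm_eq_abs, _root_.sq_abs]
    rw [h11]
    have h12 := hCf t ht d hd
    have hb := norm_nonneg (B p β t)
    have hp2 : (0:ℝ) ≤ (phi p γ (s + t))^2 := sq_nonneg _
    calc ‖B p β t‖ * (phi p γ (s + t))^2 *
          ‖Rrec p d β (fun j => γ j / Real.sqrt d) t - Rsk p β γ t‖
        ≤ ‖B p β t‖ * (phi p γ (s + t))^2 * (Cf t / d) := by
          refine mul_le_mul_of_nonneg_left h12 ?_
          positivity
      _ = ‖B p β t‖ * ((Cf t * (phi p γ (s + t))^2) / d) := by ring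
  -- assemble
  have hpart1 : ‖((d:ℂ)/2) * (∑ t ∈ T, sgn p t * B p β t *
        Rrec p d β (fun j => γ j / Real.sqrt d) t *
        (((Real.cos (phi p γ (s + t) / Real.sqrt d) : ℝ) : ℂ) - 1
          + ((phi p γ (s + t) : ℝ) : ℂ)^2 / (2*(d:ℂ))))‖
      ≤ (3/2 * (∑ t ∈ T, ‖B p β t‖ *
        ((‖Rsk p β γ t‖ + Cf t) * (phi p γ (s + t))^4))) / d := by
    rw [norm_mul]
    have h1 : ‖(d:ℂ)/2‖ = d/2 := by
      rw [norm_div, Complex.norm_real, Real.norm_eq_abs, _root_.abs_of_pos hd0]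
      simp
    rw [h1]
    have habs := le_trans (norm_sum_le _ _) (Finset.sum_le_sum hterm1)
    calc d/2 * ‖∑ t ∈ T, sgn p t * B p β t *
          Rrec p d β (fun j => γ j / Real.sqrt d) t *
          (((Real.cos (phi p γ (s + t) / Real.sqrt d) : ℝ) : ℂ) - 1
            + ((phi p γ (s + t) : ℝ) : ℂ)^2 / (2*(d:ℂ)))‖
        ≤ d/2 * ∑ t ∈ T, ‖B p β t‖ * ((‖Rsk p β γ t‖ + Cf t)
            * (3 * (phi p γ (s + t))^4 / d^2)) :=
          mul_le_mul_of_nonneg_left habs (by positivity)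
      _ = (3/2 * (∑ t ∈ T, ‖B p β t‖ *
          ((‖Rsk p β γ t‖ + Cf t) * (phi p γ (s + t))^4))) / d := by
          have hsum2 : ∑ t ∈ T, ‖B p β t‖ * ((‖Rsk p β γ t‖ + Cf t)
              * (3 * (phi p γ (s + t))^4 / d^2))
              = 3/d^2 * ∑ t ∈ T, ‖B p β t‖ *
                ((‖Rsk p β γ t‖ + Cf t) * (phi p γ (s + t))^4) := by
            rw [Finset.mul_sum]
            exact Finset.sum_congr rfl (fun t _ => by ring)
          rw [hsum2]
          field_simp
  have hpart2 : ‖(1/4 : ℂ) * (∑ t ∈ T, (sgn p t * B p β t *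
        Rrec p d β (fun j => γ j / Real.sqrt d) t * ((phi p γ (s + t) : ℝ) : ℂ)^2
      - sgn p t * B p β t * ((phi p γ (s + t) : ℝ) : ℂ)^2 * Rsk p β γ t))‖
      ≤ (1/4 * (∑ t ∈ T, ‖B p β t‖ * (Cf t * (phi p γ (s + t))^2))) / d := by
    rw [norm_mul]
    have h1 : ‖(1/4 : ℂ)‖ = 1/4 := by norm_num
    rw [h1]
    have habs := le_trans (norm_sum_le _ _) (Finset.sum_le_sum hterm2)
    calc (1/4 : ℝ) * ‖∑ t ∈ T, (sgn p t * B p β t *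
          Rrec p d β (fun j => γ j / Real.sqrt d) t * ((phi p γ (s + t) : ℝ) : ℂ)^2
        - sgn p t * B p β t * ((phi p γ (s + t) : ℝ) : ℂ)^2 * Rsk p β γ t)‖
        ≤ 1/4 * ∑ t ∈ T, ‖B p β t‖ * ((Cf t * (phi p γ (s + t))^2) / d) :=
          mul_le_mul_of_nonneg_left habs (by norm_num)
      _ = (1/4 * (∑ t ∈ T, ‖B p β t‖ * (Cf t * (phi p γ (s + t))^2))) / d := by
          have hsum3 : ∑ t ∈ T, ‖B p β t‖ * ((Cf t * (phi p γ (s + t))^2) / d)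
              = (∑ t ∈ T, ‖B p β t‖ * (Cf t * (phi p γ (s + t))^2)) / d := by
            rw [Finset.sum_div]
            exact Finset.sum_congr rfl (fun t _ => by ring)
          rw [hsum3]
          ring
  calc ‖((d:ℂ)/2) * (∑ t ∈ T, sgn p t * B p β t *
          Rrec p d β (fun j => γ j / Real.sqrt d) t *
          (((Real.cos (phi p γ (s + t) / Real.sqrt d) : ℝ) : ℂ) - 1
            + ((phi p γ (s + t) : ℝ) : ℂ)^2 / (2*(d:ℂ))))‖
        + ‖(1/4 : ℂ) * (∑ t ∈ T, (sgn p t * B p β t *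
          Rrec p d β (fun j => γ j / Real.sqrt d) t * ((phi p γ (s + t) : ℝ) : ℂ)^2
        - sgn p t * B p β t * ((phi p γ (s + t) : ℝ) : ℂ)^2 * Rsk p β γ t))‖
      ≤ (3/2 * (∑ t ∈ T, ‖B p β t‖ *
          ((‖Rsk p β γ t‖ + Cf t) * (phi p γ (s + t))^4))) / d
        + (1/4 * (∑ t ∈ T, ‖B p β t‖ * (Cf t * (phi p γ (s + t))^2))) / d :=
        add_le_add hpart1 hpart2
    _ ≤ (3/2 * (∑ t ∈ T, ‖B p β t‖ *
          ((‖Rsk p β γ t‖ + Cf t) * (phi p γ (s + t))^4))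
        + 1/4 * (∑ t ∈ T, ‖B p β t‖ * (Cf t * (phi p γ (s + t))^2)) + 1) / d := by
        rw [← add_div, div_le_div_iff₀ hd0 hd0]
        nlinarith

lemma base_case {p : ℕ} (β γ : Fin p → ℝ) (s : BS p) (hif : ¬ (L p s + 2 ≤ p)) :
    ∃ C, 0 < C ∧ ∀ d : ℝ, 2 ≤ d →
      ‖Rrec p d β (fun j => γ j / Real.sqrt d) s - Rsk p β γ s‖ ≤ C / d := by
  obtain ⟨Cx, hCx0, hCx⟩ := Xbound β γ s
  obtain ⟨C, hC0, hC⟩ := exp_est (-(1/4 : ℂ) *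
    ∑ t ∈ Finset.univ.filter (fun t : BS p => L p t = p),
      sgn p t * B p β t * ((phi p γ (s + t) : ℝ) : ℂ) ^ 2) Cx hCx0
  refine ⟨C, hC0, fun d hd => ?_⟩
  rw [Rrec, Rsk, if_neg hif, if_neg hif, mul_one, mul_one]
  exact hC _ d hd (hCx d hd)

lemma main_est {p : ℕ} (β γ : Fin p → ℝ) : ∀ (n : ℕ) (s : BS p), p ≤ L p s + n →
    ∃ C, 0 < C ∧ ∀ d : ℝ, 2 ≤ d →
      ‖Rrec p d β (fun j => γ j / Real.sqrt d) s - Rsk p β γ s‖ ≤ C / d := by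
  intro n
  induction n with
  | zero =>
    intro s hs
    have hLs : L p s = p := le_antisymm (L_le s) (by omega)
    exact base_case β γ s (by omega)
  | succ n ih =>
    intro s hs
    by_cases hif : L p s + 2 ≤ p
    · have H : ∀ t : BS p, ∃ Ct : ℝ, 0 < Ct ∧ (L p s < L p t → ∀ d : ℝ, 2 ≤ d →
          ‖Rrec p d β (fun j => γ j / Real.sqrt d) t - Rsk p β γ t‖ ≤ Ct / d) := by
        intro t
        by_cases hlt : L p s < L p t
        · obtain ⟨Ct, h1, h2⟩ := ih t (by omega)
          exact ⟨Ct, h1, fun _ => h2⟩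
        · exact ⟨1, one_pos, fun h => absurd h hlt⟩
      choose Cf hCf0 hCf2 using H
      obtain ⟨Cy, hCy0, hCy⟩ := Ybound β γ s Cf hCf0
        (fun t ht d hd => hCf2 t (Finset.mem_filter.1 ht).2.1 d hd)
      obtain ⟨Cx, hCx0, hCx⟩ := Xbound β γ s
      obtain ⟨C, hC0, hC⟩ := exp_est ((-(1/4 : ℂ) *
          ∑ t ∈ Finset.univ.filter (fun t : BS p => L p t = p),
            sgn p t * B p β t * ((phi p γ (s + t) : ℝ) : ℂ) ^ 2) +
        (-(1/4 : ℂ) *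
          ∑ t ∈ (Finset.univ.filter (fun t : BS p => L p s < L p t ∧ L p t < p)).attach,
            sgn p t.1 * B p β t.1 * ((phi p γ (s + t.1) : ℝ) : ℂ) ^ 2 * Rsk p β γ t.1))
        (Cx + Cy) (by positivity)
      refine ⟨C, hC0, fun d hd => ?_⟩
      rw [Rrec, Rsk, if_pos hif, if_pos hif, ← Complex.exp_add, ← Complex.exp_add]
      refine hC _ d hd ?_
      have habs_add4 : ∀ a b c e : ℂ,
          ‖(a + b) - (c + e)‖ ≤ ‖a - c‖ + ‖b - e‖ := by
        intro a b c e
        have he : (a + b) - (c + e) = (a - c) + (b - e) := by ring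
        rw [he]
        exact norm_add_le _ _
      refine le_trans (habs_add4 _ _ _ _) ?_
      calc ‖_‖ + ‖_‖ ≤ Cx / d + Cy / d :=
            add_le_add (hCx d hd) (hCy d hd)
        _ = (Cx + Cy) / d := (add_div Cx Cy d).symm
    · exact base_case β γ s hif

/-- with rescaled angles `(β, γ/√d)`, the Erdos-Renyi quantities
`R_s(d)` converge to the SK quantities `R̃_s` at rate `O(1/d)`. -/
theorem stmt_15 (p : ℕ) (hp : 1 ≤ p) (β γ : Fin p → ℝ) :
    ∃ C > 0, ∀ d : ℝ, 2 ≤ d → ∀ s : BS p,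
      ‖Rrec p d β (fun j => γ j / Real.sqrt d) s - Rsk p β γ s‖ ≤ C / d := by
  have H : ∀ s : BS p, ∃ C, 0 < C ∧ ∀ d : ℝ, 2 ≤ d →
      ‖Rrec p d β (fun j => γ j / Real.sqrt d) s - Rsk p β γ s‖ ≤ C / d :=
    fun s => main_est β γ p s (Nat.le_add_left p (L p s))
  choose Cs hCs0 hCs using H
  refine ⟨∑ s : BS p, Cs s, Finset.sum_pos (fun s _ => hCs0 s) Finset.univ_nonempty,
    fun d hd s => ?_⟩
  have hd0 : (0:ℝ) < d := by linarith
  refine le_trans (hCs s d hd) ?_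
  exact (div_le_div_iff_of_pos_right hd0).2 (Finset.single_le_sum (fun u _ => (hCs0 u).le) (Finset.mem_univ s))


end QAOA
end
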